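/- arXiv:2402.03941 — 5 statements merged into one kernel-verified Lean document; each statement's English description precedes it below -/
import Mathlib

section
/- Let X and Y be random variables on a probability space taking values in finite sets 𝒳 and 𝒴, and let w_1, …, w_{k+1} : 𝒳 → 𝒞 be functions, with h_S(X) := (w_i(X))_{i∈S} for S ⊆ {1,…,k+1} and [j] := {1,…,j}. Suppose (i) Y is NOT conditionally independent of w_{k+1}(X) given h_{[k]}(X), and (ii) S ⊆ [k+1] satisfies Y ⊥ h_{[k+1]∖S}(X) | h_S(X). Then the conditional mutual information satisfies I(Y; X | h_S(X)) = I(Y; X | h_{[k+1]}(X)) < I(Y; X | h_{[k]}(X)). -/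
open MeasureTheory

/-- Shannon entropy of a finite-valued random variable `X` with respect to the
measure `μ` on the sample space. -/
noncomputable def Hent {Ω α : Type*} [MeasurableSpace Ω] [Fintype α]
    (μ : Measure Ω) (X : Ω → α) : ℝ :=
  -∑ a : α, (μ (X ⁻¹' {a})).toReal * Real.log (μ (X ⁻¹' {a})).toReal

/-- Conditional entropy `H(X | Z)` of finite-valued random variables,
defined by the chain rule `H(X | Z) = H(X, Z) - H(Z)`. -/
noncomputable def condHent {Ω α β : Type*} [MeasurableSpace Ω] [Fintype α] [Fintype β]
    (μ : Measure Ω) (X : Ω → α) (Z : Ω → β) : ℝ :=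
  Hent μ (fun ω => (X ω, Z ω)) - Hent μ Z

/-- Conditional mutual information `I(Y ; X | Z)` of finite-valued random variables,
defined as `H(Y | Z) - H(Y | (X, Z))`. -/
noncomputable def condMI {Ω α β γ : Type*} [MeasurableSpace Ω]
    [Fintype α] [Fintype β] [Fintype γ]
    (μ : Measure Ω) (Y : Ω → α) (X : Ω → β) (Z : Ω → γ) : ℝ :=
  condHent μ Y Z - condHent μ Y (fun ω => (X ω, Z ω))

/-- Conditional independence `Y ⊥ W | Z` for finite-valued random variables:
for all values `a, b, c`, `P(Y = a, W = b, Z = c) * P(Z = c) =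
P(Y = a, Z = c) * P(W = b, Z = c)`. -/
def CondIndepFun {Ω α β γ : Type*} [MeasurableSpace Ω]
    (μ : Measure Ω) (Y : Ω → α) (W : Ω → β) (Z : Ω → γ) : Prop :=
  ∀ (a : α) (b : β) (c : γ),
    (μ {ω | Y ω = a ∧ W ω = b ∧ Z ω = c}).toReal * (μ {ω | Z ω = c}).toReal =
    (μ {ω | Y ω = a ∧ Z ω = c}).toReal * (μ {ω | W ω = b ∧ Z ω = c}).toReal

section Abstract
variable {I : Type*} [Fintype I] (p : I → ℝ)

open scoped Classical in
/-- probability mass of the fiber of `F` over `a` -/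
noncomputable def pmD {α : Type*} (F : I → α) (a : α) : ℝ :=
  ∑ i ∈ Finset.univ.filter (fun i => F i = a), p i

open scoped Classical in
/-- entropy of `F` under the weight `p` -/
noncomputable def entD {α : Type*} [Fintype α] (F : I → α) : ℝ :=
  -∑ a : α, pmD p F a * Real.log (pmD p F a)

lemma pmD_nonneg {α : Type*} (hp : ∀ i, 0 ≤ p i) (F : I → α) (a : α) : 0 ≤ pmD p F a :=
  Finset.sum_nonneg fun i _ => hp i

lemma pmD_congr {α α' : Type*} (F : I → α) (F' : I → α') (a : α) (a' : α')
    (h : ∀ i, F i = a ↔ F' i = a') : pmD p F a = pmD p F' a' := by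
  classical
  unfold pmD
  apply Finset.sum_congr _ (fun _ _ => rfl)
  ext i; simp [h i]

lemma pmD_le {α α' : Type*} (hp : ∀ i, 0 ≤ p i) (F : I → α) (F' : I → α') (a : α) (a' : α')
    (h : ∀ i, F i = a → F' i = a') : pmD p F a ≤ pmD p F' a' := by
  classical
  unfold pmD
  apply Finset.sum_le_sum_of_subset_of_nonneg
  · intro i hi; simp only [Finset.mem_filter, Finset.mem_univ, true_and] at *
    exact h i hi
  · exact fun i _ _ => hp i

lemma sum_pmD {α : Type*} [Fintype α] (F : I → α) : ∑ a : α, pmD p F a = ∑ i : I, p i := by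
  classical
  unfold pmD
  exact Finset.sum_fiberwise_of_maps_to (fun i _ => Finset.mem_univ (F i)) p

lemma pmD_marg_right {α β : Type*} [Fintype β] (F : I → α) (G : I → β) (a : α) :
    ∑ b : β, pmD p (fun i => (F i, G i)) (a, b) = pmD p F a := by
  classical
  unfold pmD
  rw [← Finset.sum_fiberwise_of_maps_to (g := G) (t := Finset.univ)
    (fun i _ => Finset.mem_univ (G i)) p]
  apply Finset.sum_congr rfl
  intro b _
  apply Finset.sum_congr _ (fun _ _ => rfl)
  ext i; simp [Prod.ext_iff, and_comm]

lemma pmD_marg_left {α β : Type*} [Fintype α] (F : I → α) (G : I → β) (b : β) :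
    ∑ a : α, pmD p (fun i => (F i, G i)) (a, b) = pmD p G b := by
  classical
  rw [← pmD_marg_right p G F b]
  apply Finset.sum_congr rfl
  intro a _
  exact pmD_congr p _ _ _ _ (fun i => by simp [Prod.ext_iff, and_comm])

lemma entD_relabel {α β : Type*} [Fintype α] [Fintype β] (F : I → α) (g : α → β)
    (hg : Function.Injective g) : entD p (fun i => g (F i)) = entD p F := by
  classical
  unfold entD
  congr 1
  have hzero : ∀ b ∈ Finset.univ, b ∉ Finset.univ.image g →
      pmD p (fun i => g (F i)) b * Real.log (pmD p (fun i => g (F i)) b) = 0 := by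
    intro b _ hb
    have : pmD p (fun i => g (F i)) b = 0 := by
      unfold pmD
      apply Finset.sum_eq_zero
      intro i hi
      simp only [Finset.mem_filter] at hi
      exact absurd (Finset.mem_image.2 ⟨F i, Finset.mem_univ _, hi.2⟩) hb
    simp [this]
  rw [← Finset.sum_subset (Finset.subset_univ (Finset.univ.image g)) hzero,
    Finset.sum_image (fun a _ a' _ h => hg h)]
  apply Finset.sum_congr rfl
  intro a _
  rw [pmD_congr p (fun i => g (F i)) F (g a) a (fun i => ⟨fun h => hg h, fun h => congrArg g h⟩)]

section Core
variable {α β γ : Type*} [Fintype α] [Fintype β] [Fintype γ]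

/-- conditional independence at the pmf level -/
def pmCI (Yf : I → α) (G : I → β) (H : I → γ) : Prop :=
  ∀ a b c, pmD p (fun i => (Yf i, G i, H i)) (a, b, c) * pmD p H c =
    pmD p (fun i => (Yf i, H i)) (a, c) * pmD p (fun i => (G i, H i)) (b, c)

lemma helperA {δ ε : Type*} [Fintype δ] [Fintype ε] (A : I → δ) (B : I → ε) (ψ : δ → ℝ) :
    ∑ u : δ × ε, pmD p (fun i => (A i, B i)) u * ψ u.1 = ∑ d : δ, pmD p A d * ψ d := by
  rw [Fintype.sum_prod_type]
  apply Finset.sum_congr rfl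
  intro d _
  have : ∀ e : ε, pmD p (fun i => (A i, B i)) (d, e) * ψ d
      = pmD p (fun i => (A i, B i)) (d, e) * ψ (d, e).1 := fun e => rfl
  rw [← pmD_marg_right p A B d, Finset.sum_mul]

lemma sumq_t (Yf : I → α) (G : I → β) (H : I → γ) (ψ : γ → ℝ) :
    ∑ v : α × β × γ, pmD p (fun i => (Yf i, G i, H i)) v * ψ v.2.2
      = ∑ c : γ, pmD p H c * ψ c := by
  rw [← helperA p H (fun i => (Yf i, G i)) ψ]
  exact Fintype.sum_equiv ⟨fun v => (v.2.2, v.1, v.2.1), fun u => (u.2.1, u.2.2, u.1),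
    fun v => rfl, fun u => rfl⟩ _ _ (fun v => by
      rw [pmD_congr p (fun i => (Yf i, G i, H i)) (fun i => (H i, Yf i, G i)) v
        (v.2.2, v.1, v.2.1) (fun i => by
          obtain ⟨a, b, c⟩ := v; simp only [Prod.mk.injEq]; tauto)]
      rfl)

lemma sumq_r (Yf : I → α) (G : I → β) (H : I → γ) (ψ : α × γ → ℝ) :
    ∑ v : α × β × γ, pmD p (fun i => (Yf i, G i, H i)) v * ψ (v.1, v.2.2)
      = ∑ w : α × γ, pmD p (fun i => (Yf i, H i)) w * ψ w := by
  rw [← helperA p (fun i => (Yf i, H i)) G ψ]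
  exact Fintype.sum_equiv ⟨fun v => ((v.1, v.2.2), v.2.1), fun u => (u.1.1, u.2, u.1.2),
    fun v => rfl, fun u => rfl⟩ _ _ (fun v => by
      rw [pmD_congr p (fun i => (Yf i, G i, H i)) (fun i => ((Yf i, H i), G i)) v
        ((v.1, v.2.2), v.2.1) (fun i => by
          obtain ⟨a, b, c⟩ := v; simp only [Prod.mk.injEq]; tauto)]
      rfl)

lemma sumq_s (Yf : I → α) (G : I → β) (H : I → γ) (ψ : β × γ → ℝ) :
    ∑ v : α × β × γ, pmD p (fun i => (Yf i, G i, H i)) v * ψ v.2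
      = ∑ u : β × γ, pmD p (fun i => (G i, H i)) u * ψ u := by
  rw [← helperA p (fun i => (G i, H i)) Yf ψ]
  exact Fintype.sum_equiv ⟨fun v => (v.2, v.1), fun u => (u.2, u.1),
    fun v => rfl, fun u => rfl⟩ _ _ (fun v => by
      rw [pmD_congr p (fun i => (Yf i, G i, H i)) (fun i => ((G i, H i), Yf i)) v
        (v.2, v.1) (fun i => by
          obtain ⟨a, b, c⟩ := v; simp only [Prod.mk.injEq]; tauto)]
      rfl)


lemma core (Yf : I → α) (G : I → β) (H : I → γ)
    (hp : ∀ i, 0 ≤ p i) (hs1 : ∑ i : I, p i = 1) :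
    (pmCI p Yf G H → entD p (fun i => (Yf i, G i, H i)) + entD p H
        = entD p (fun i => (Yf i, H i)) + entD p (fun i => (G i, H i))) ∧
    (entD p (fun i => (Yf i, H i)) + entD p (fun i => (G i, H i)) ≤
        entD p (fun i => (Yf i, G i, H i)) + entD p H → pmCI p Yf G H) ∧
    entD p (fun i => (Yf i, G i, H i)) + entD p H ≤
        entD p (fun i => (Yf i, H i)) + entD p (fun i => (G i, H i)) := by
  classical
  set q : α × β × γ → ℝ := pmD p (fun i => (Yf i, G i, H i)) with hqdef
  set r : α × γ → ℝ := pmD p (fun i => (Yf i, H i)) with hrdef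
  set s : β × γ → ℝ := pmD p (fun i => (G i, H i)) with hsdef
  set t : γ → ℝ := pmD p H with htdef
  have hq0 : ∀ v, 0 ≤ q v := fun v => pmD_nonneg p hp _ v
  have hr0 : ∀ w, 0 ≤ r w := fun w => pmD_nonneg p hp _ w
  have hs0 : ∀ u, 0 ≤ s u := fun u => pmD_nonneg p hp _ u
  have ht0 : ∀ c, 0 ≤ t c := fun c => pmD_nonneg p hp _ c
  have hqt : ∀ v, q v ≤ t v.2.2 :=
    fun v => pmD_le p hp _ _ _ _ (fun i hi => congrArg (fun u => u.2.2) hi)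
  have hqr : ∀ v, q v ≤ r (v.1, v.2.2) :=
    fun v => pmD_le p hp _ _ _ _ (fun i hi => congrArg (fun u => (u.1, u.2.2)) hi)
  have hqs : ∀ v, q v ≤ s v.2 :=
    fun v => pmD_le p hp _ _ _ _ (fun i hi => congrArg (fun u => u.2) hi)
  have hrt : ∀ w : α × γ, r w ≤ t w.2 :=
    fun w => pmD_le p hp _ _ _ _ (fun i hi => congrArg (fun u => u.2) hi)
  have hmarg_r : ∀ c, ∑ a : α, r (a, c) = t c := fun c => pmD_marg_left p Yf H c
  have hmarg_s : ∀ c, ∑ b : β, s (b, c) = t c := fun c => pmD_marg_left p G H c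
  have hsum_t : ∑ c : γ, t c = 1 := by rw [htdef, sum_pmD, hs1]
  have hsum_q : ∑ v : α × β × γ, q v = 1 := by rw [hqdef, sum_pmD, hs1]
  set T : Finset (α × β × γ) := Finset.univ.filter (fun v => 0 < q v) with hTdef
  have hmemT : ∀ v, v ∈ T ↔ 0 < q v := by
    intro v; simp [hTdef]
  have hsplit : ∀ f : α × β × γ → ℝ, (∀ v, q v = 0 → f v = 0) →
      ∑ v ∈ T, f v = ∑ v : α × β × γ, f v := by
    intro f hf
    apply Finset.sum_filter_of_ne
    intro v _ hfv
    rcases (hq0 v).lt_or_eq with h | h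
    · exact h
    · exact absurd (hf v h.symm) hfv
  have hsum_qT : ∑ v ∈ T, q v = 1 := by
    rw [hsplit q (fun v h => h)]; exact hsum_q
  have hTne : T.Nonempty := by
    apply Finset.nonempty_of_sum_ne_zero (f := q)
    rw [hsum_qT]; norm_num
  -- the D identity
  set stuff : α × β × γ → ℝ := fun v =>
    Real.log (q v) + Real.log (t v.2.2) - Real.log (r (v.1, v.2.2)) - Real.log (s v.2)
    with hstuffdef
  have hD : entD p (fun i => (Yf i, H i)) + entD p (fun i => (G i, H i))
      - entD p (fun i => (Yf i, G i, H i)) - entD p H = ∑ v ∈ T, q v * stuff v := by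
    have e1 : entD p (fun i => (Yf i, H i))
        = -∑ v : α × β × γ, q v * Real.log (r (v.1, v.2.2)) := by
      rw [hqdef, sumq_r p Yf G H (fun w => Real.log (r w))]; rfl
    have e2 : entD p (fun i => (G i, H i))
        = -∑ v : α × β × γ, q v * Real.log (s v.2) := by
      rw [hqdef, sumq_s p Yf G H (fun u => Real.log (s u))]; rfl
    have e3 : entD p H = -∑ v : α × β × γ, q v * Real.log (t v.2.2) := by
      rw [hqdef, sumq_t p Yf G H (fun c => Real.log (t c))]; rfl
    have e4 : entD p (fun i => (Yf i, G i, H i))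
        = -∑ v : α × β × γ, q v * Real.log (q v) := rfl
    rw [e1, e2, e3, e4, hsplit (fun v => q v * stuff v) (fun v h => by simp [h])]
    rw [show ∀ A B C D : ℝ, -A + -B - -C - -D = (C + D) - (A + B) by intros; ring]
    rw [← Finset.sum_add_distrib, ← Finset.sum_add_distrib, ← Finset.sum_sub_distrib]
    apply Finset.sum_congr rfl
    intro v _
    rw [hstuffdef]; ring
  -- positivity on the support
  have hTpos : ∀ v ∈ T, 0 < q v ∧ 0 < t v.2.2 ∧ 0 < r (v.1, v.2.2) ∧ 0 < s v.2 := by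
    intro v hv
    have hq := (hmemT v).1 hv
    exact ⟨hq, lt_of_lt_of_le hq (hqt v), lt_of_lt_of_le hq (hqr v),
      lt_of_lt_of_le hq (hqs v)⟩
  set x : α × β × γ → ℝ := fun v => r (v.1, v.2.2) * s v.2 / (q v * t v.2.2) with hxdef
  have hstuffx : ∀ v ∈ T, stuff v = -Real.log (x v) := by
    intro v hv
    obtain ⟨h1, h2, h3, h4⟩ := hTpos v hv
    rw [hxdef, hstuffdef]
    simp only
    rw [Real.log_div (by positivity) (by positivity), Real.log_mul h3.ne' h4.ne',
      Real.log_mul h1.ne' h2.ne']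
    ring
  have hxpos : ∀ v ∈ T, 0 < x v := by
    intro v hv
    obtain ⟨h1, h2, h3, h4⟩ := hTpos v hv
    rw [hxdef]; positivity
  have hD2 : entD p (fun i => (Yf i, H i)) + entD p (fun i => (G i, H i))
      - entD p (fun i => (Yf i, G i, H i)) - entD p H
      = -∑ v ∈ T, q v * Real.log (x v) := by
    rw [hD, ← Finset.sum_neg_distrib]
    apply Finset.sum_congr rfl
    intro v hv
    rw [hstuffx v hv]; ring
  -- bound on the Jensen average
  have step0 : ∀ v ∈ T, q v * x v = r (v.1, v.2.2) * s v.2 / t v.2.2 := by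
    intro v hv
    obtain ⟨h1, h2, h3, h4⟩ := hTpos v hv
    rw [hxdef]
    field_simp
  have step1 : ∑ v ∈ T, r (v.1, v.2.2) * s v.2 / t v.2.2
      ≤ ∑ v : α × β × γ, r (v.1, v.2.2) * s v.2 / t v.2.2 := by
    apply Finset.sum_le_sum_of_subset_of_nonneg (Finset.subset_univ T)
    intro v _ _
    have := hr0 (v.1, v.2.2); have := hs0 v.2; have := ht0 v.2.2
    positivity
  have step2 : ∑ v : α × β × γ, r (v.1, v.2.2) * s v.2 / t v.2.2
      = ∑ c : γ, t c * t c / t c := by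
    rw [Fintype.sum_prod_type, Finset.sum_comm]
    dsimp only
    trans ∑ y : β × γ, t y.2 * s y / t y.2
    · refine Finset.sum_congr rfl fun y _ => ?_
      rw [← Finset.sum_div, ← Finset.sum_mul, hmarg_r y.2]
    · rw [Fintype.sum_prod_type, Finset.sum_comm]
      dsimp only
      refine Finset.sum_congr rfl fun c _ => ?_
      rw [← Finset.sum_div, ← Finset.mul_sum, hmarg_s c]
  have step3 : ∑ c : γ, t c * t c / t c ≤ 1 := by
    rw [← hsum_t]
    apply Finset.sum_le_sum
    intro c _
    rcases eq_or_ne (t c) 0 with h | h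
    · simp [h]
    · rw [mul_div_assoc, div_self h, mul_one]
  have hall : ∑ v : α × β × γ, r (v.1, v.2.2) * s v.2 / t v.2.2 ≤ 1 :=
    step2 ▸ step3
  have hSxrst : ∑ v ∈ T, q v * x v = ∑ v ∈ T, r (v.1, v.2.2) * s v.2 / t v.2.2 :=
    Finset.sum_congr rfl step0
  have hSxle : ∑ v ∈ T, q v * x v ≤ 1 := by
    rw [hSxrst]; exact le_trans step1 hall
  have hSxpos : 0 < ∑ v ∈ T, q v * x v :=
    Finset.sum_pos (fun v hv => mul_pos ((hmemT v).1 hv) (hxpos v hv)) hTne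
  have hJensen : ∑ v ∈ T, q v * Real.log (x v) ≤ Real.log (∑ v ∈ T, q v * x v) := by
    have := strictConcaveOn_log_Ioi.concaveOn.le_map_sum (t := T) (w := q) (p := x)
      (fun v hv => ((hmemT v).1 hv).le) hsum_qT
      (fun v hv => Set.mem_Ioi.2 (hxpos v hv))
    simpa [smul_eq_mul] using this
  have hlogSx : Real.log (∑ v ∈ T, q v * x v) ≤ 0 := Real.log_nonpos hSxpos.le hSxle
  have hL : ∑ v ∈ T, q v * Real.log (x v) ≤ 0 := le_trans hJensen hlogSx
  refine ⟨?_, ?_, by linarith [hD2, hL]⟩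
  · -- conditional independence gives equality
    intro hci
    have hzero : ∑ v ∈ T, q v * stuff v = 0 := by
      apply Finset.sum_eq_zero
      intro v hv
      obtain ⟨h1, h2, h3, h4⟩ := hTpos v hv
      have hciv : q v * t v.2.2 = r (v.1, v.2.2) * s v.2 := hci v.1 v.2.1 v.2.2
      have hst : stuff v = Real.log (q v * t v.2.2) - Real.log (r (v.1, v.2.2) * s v.2) := by
        rw [hstuffdef]
        dsimp only
        rw [Real.log_mul h1.ne' h2.ne', Real.log_mul h3.ne' h4.ne']
        ring
      rw [hst, hciv, sub_self, mul_zero]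
    linarith [hD, hzero]
  · -- equality (≤ in the other direction) forces conditional independence
    intro hle
    have hLge : 0 ≤ ∑ v ∈ T, q v * Real.log (x v) := by linarith [hD2]
    have hLeq : ∑ v ∈ T, q v * Real.log (x v) = 0 := le_antisymm hL hLge
    have hlogSx0 : Real.log (∑ v ∈ T, q v * x v) = 0 :=
      le_antisymm hlogSx (by rw [← hLeq]; exact hJensen)
    have hSx1 : ∑ v ∈ T, q v * x v = 1 := by
      rcases Real.log_eq_zero.1 hlogSx0 with h | h | h
      · exact absurd h hSxpos.ne'
      · exact h
      · linarith [hSxpos]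
    have hxconst : ∀ j ∈ T, ∀ k ∈ T, x j = x k := by
      have h_eq : Real.log (∑ v ∈ T, q v • x v) ≤ ∑ v ∈ T, q v • Real.log (x v) := by
        simp only [smul_eq_mul]
        rw [hlogSx0, hLeq]
      exact strictConcaveOn_log_Ioi.eq_of_map_sum_eq (fun v hv => (hmemT v).1 hv)
        hsum_qT (fun v hv => Set.mem_Ioi.2 (hxpos v hv)) h_eq
    obtain ⟨v₀, hv₀⟩ := hTne
    have hlogx0 : Real.log (x v₀) = 0 := by
      have hcc : ∑ v ∈ T, q v * Real.log (x v) = (∑ v ∈ T, q v) * Real.log (x v₀) := by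
        rw [Finset.sum_mul]
        exact Finset.sum_congr rfl (fun v hv => by rw [hxconst v hv v₀ hv₀])
      rw [hLeq, hsum_qT, one_mul] at hcc
      exact hcc.symm
    have hx1 : ∀ v ∈ T, x v = 1 := by
      intro v hv
      have hlx : Real.log (x v) = 0 := by rw [hxconst v hv v₀ hv₀, hlogx0]
      rcases Real.log_eq_zero.1 hlx with h | h | h
      · exact absurd h (hxpos v hv).ne'
      · exact h
      · linarith [hxpos v hv]
    have hon : ∀ v ∈ T, q v * t v.2.2 = r (v.1, v.2.2) * s v.2 := by
      intro v hv
      obtain ⟨h1, h2, h3, h4⟩ := hTpos v hv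
      have hxv := hx1 v hv
      rw [hxdef] at hxv
      dsimp only at hxv
      rw [div_eq_one_iff_eq (by positivity)] at hxv
      exact hxv.symm
    have hdiff : ∑ v ∈ Finset.univ \ T, r (v.1, v.2.2) * s v.2 / t v.2.2 = 0 := by
      have h1 : ∑ v ∈ T, r (v.1, v.2.2) * s v.2 / t v.2.2 = 1 := by
        rw [← hSxrst, hSx1]
      have h2 : ∑ v : α × β × γ, r (v.1, v.2.2) * s v.2 / t v.2.2 = 1 :=
        le_antisymm hall (by rw [← h1]; exact step1)
      rw [Finset.sum_sdiff_eq_sub (Finset.subset_univ T), h1, h2, sub_self]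
    have hoff : ∀ v ∈ Finset.univ \ T, r (v.1, v.2.2) * s v.2 / t v.2.2 = 0 := by
      intro v hv
      refine (Finset.sum_eq_zero_iff_of_nonneg ?_).1 hdiff v hv
      intro u _
      have := hr0 (u.1, u.2.2); have := hs0 u.2; have := ht0 u.2.2
      positivity
    intro a b c
    by_cases hv : (a, b, c) ∈ T
    · exact hon (a, b, c) hv
    · have hq0v : q (a, b, c) = 0 := by
        rcases (hq0 (a, b, c)).lt_or_eq with h | h
        · exact absurd ((hmemT (a, b, c)).2 h) hv
        · exact h.symm
      have hrs : r (a, c) * s (b, c) / t c = 0 :=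
        hoff (a, b, c) (Finset.mem_sdiff.2 ⟨Finset.mem_univ _, hv⟩)
      show q (a, b, c) * t c = r (a, c) * s (b, c)
      rcases div_eq_zero_iff.1 hrs with h | h
      · rw [hq0v, zero_mul, h]
      · have hrz : r (a, c) = 0 := le_antisymm (by simpa [h] using hrt (a, c)) (hr0 _)
        rw [hq0v, zero_mul, hrz, zero_mul]

end Core
end Abstract

section Bridge
variable {Ω 𝒳 𝒴 : Type*} [MeasurableSpace Ω]
    [MeasurableSpace 𝒳] [MeasurableSingletonClass 𝒳] [Fintype 𝒳]
    [MeasurableSpace 𝒴] [MeasurableSingletonClass 𝒴] [Fintype 𝒴]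
    (μ : Measure Ω) [IsProbabilityMeasure μ]
    (X : Ω → 𝒳) (Y : Ω → 𝒴)

/-- joint distribution of `(Y, X)` as a pmf -/
noncomputable def jp : 𝒴 × 𝒳 → ℝ :=
  fun i => (μ ((fun ω => (Y ω, X ω)) ⁻¹' {i})).toReal

lemma jp_nonneg : ∀ i, 0 ≤ jp μ X Y i := fun _ => ENNReal.toReal_nonneg

variable (hX : Measurable X) (hY : Measurable Y)

open scoped Classical in
lemma jp_pm {δ : Type*} (F : 𝒴 × 𝒳 → δ) (a : δ) (hX : Measurable X) (hY : Measurable Y) :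
    (μ ((fun ω => F (Y ω, X ω)) ⁻¹' {a})).toReal = pmD (jp μ X Y) F a := by
  have hJ : Measurable (fun ω => (Y ω, X ω)) := hY.prodMk hX
  have hset : (fun ω => F (Y ω, X ω)) ⁻¹' {a}
      = ⋃ i ∈ Finset.univ.filter (fun i => F i = a), (fun ω => (Y ω, X ω)) ⁻¹' {i} := by
    ext ω
    simp only [Set.mem_preimage, Set.mem_singleton_iff, Set.mem_iUnion, Finset.mem_filter,
      Finset.mem_univ, true_and, exists_prop]
    constructor
    · intro h; exact ⟨(Y ω, X ω), h, rfl⟩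
    · rintro ⟨i, hF, hJi⟩; rw [hJi]; exact hF
  rw [hset, measure_biUnion_finset ?hd ?hm]
  · rw [ENNReal.toReal_sum (fun i _ => measure_ne_top μ _)]
    rfl
  case hd =>
    intro i _ j _ hij
    exact (Set.disjoint_singleton.2 hij).preimage _
  case hm =>
    intro i _
    exact hJ (measurableSet_singleton i)

lemma jp_sum (hX : Measurable X) (hY : Measurable Y) : ∑ i : 𝒴 × 𝒳, jp μ X Y i = 1 := by
  classical
  have h := jp_pm μ X Y (fun _ : 𝒴 × 𝒳 => (0 : Fin 1)) 0 hX hY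
  have h2 : ((fun ω => (0 : Fin 1)) ⁻¹' {0} : Set Ω) = Set.univ := by
    ext ω; simp
  rw [h2, measure_univ, ENNReal.toReal_one] at h
  rw [← sum_pmD (jp μ X Y) (fun _ : 𝒴 × 𝒳 => (0 : Fin 1))]
  rw [Fin.sum_univ_one]
  exact h.symm

lemma Hent_bridge {δ : Type*} [Fintype δ] (F : 𝒴 × 𝒳 → δ)
    (hX : Measurable X) (hY : Measurable Y) :
    Hent μ (fun ω => F (Y ω, X ω)) = entD (jp μ X Y) F := by
  unfold Hent entD
  congr 1
  refine Finset.sum_congr rfl fun a _ => ?_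
  rw [jp_pm μ X Y F a hX hY]

lemma CI_bridge {β' γ' : Type*} (Gf : 𝒴 × 𝒳 → β') (Hf : 𝒴 × 𝒳 → γ')
    (hX : Measurable X) (hY : Measurable Y) :
    CondIndepFun μ Y (fun ω => Gf (Y ω, X ω)) (fun ω => Hf (Y ω, X ω)) ↔
      pmCI (jp μ X Y) (fun i => i.1) Gf Hf := by
  have m1 : ∀ (a : 𝒴) (b : β') (c : γ'),
      (μ {ω | Y ω = a ∧ Gf (Y ω, X ω) = b ∧ Hf (Y ω, X ω) = c}).toReal
        = pmD (jp μ X Y) (fun i => (i.1, Gf i, Hf i)) (a, b, c) := by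
    intro a b c
    rw [← jp_pm μ X Y (fun i => (i.1, Gf i, Hf i)) (a, b, c) hX hY]
    congr 2
    ext ω
    simp [Prod.ext_iff]
  have m2 : ∀ (c : γ'), (μ {ω | Hf (Y ω, X ω) = c}).toReal = pmD (jp μ X Y) Hf c := by
    intro c
    rw [← jp_pm μ X Y Hf c hX hY]
    rfl
  have m3 : ∀ (a : 𝒴) (c : γ'),
      (μ {ω | Y ω = a ∧ Hf (Y ω, X ω) = c}).toReal
        = pmD (jp μ X Y) (fun i => (i.1, Hf i)) (a, c) := by
    intro a c
    rw [← jp_pm μ X Y (fun i => (i.1, Hf i)) (a, c) hX hY]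
    congr 2
    ext ω
    simp [Prod.ext_iff]
  have m4 : ∀ (b : β') (c : γ'),
      (μ {ω | Gf (Y ω, X ω) = b ∧ Hf (Y ω, X ω) = c}).toReal
        = pmD (jp μ X Y) (fun i => (Gf i, Hf i)) (b, c) := by
    intro b c
    rw [← jp_pm μ X Y (fun i => (Gf i, Hf i)) (b, c) hX hY]
    congr 2
    ext ω
    simp [Prod.ext_iff]
  unfold CondIndepFun pmCI
  constructor
  · intro h a b c
    rw [← m1, ← m2, ← m3, ← m4]
    exact h a b c
  · intro h a b c
    rw [m1, m2, m3, m4]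
    exact h a b c

lemma condMI_bridge {δ : Type*} [Fintype δ] (g : 𝒳 → δ)
    (hX : Measurable X) (hY : Measurable Y) :
    condMI μ Y X (fun ω => g (X ω)) =
      (entD (jp μ X Y) (fun i => (i.1, g i.2)) - entD (jp μ X Y) (fun i => g i.2))
      - (entD (jp μ X Y) (fun i : 𝒴 × 𝒳 => i)
          - entD (jp μ X Y) (fun i : 𝒴 × 𝒳 => i.2)) := by
  have e1 : Hent μ (fun ω => (Y ω, g (X ω)))
      = entD (jp μ X Y) (fun i : 𝒴 × 𝒳 => (i.1, g i.2)) :=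
    Hent_bridge μ X Y (fun i : 𝒴 × 𝒳 => (i.1, g i.2)) hX hY
  have e2 : Hent μ (fun ω => g (X ω)) = entD (jp μ X Y) (fun i : 𝒴 × 𝒳 => g i.2) :=
    Hent_bridge μ X Y (fun i : 𝒴 × 𝒳 => g i.2) hX hY
  have e3 : Hent μ (fun ω => (Y ω, (X ω, g (X ω))))
      = entD (jp μ X Y) (fun i : 𝒴 × 𝒳 => (i.1, i.2, g i.2)) :=
    Hent_bridge μ X Y (fun i : 𝒴 × 𝒳 => (i.1, i.2, g i.2)) hX hY
  have e4 : Hent μ (fun ω => (X ω, g (X ω)))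
      = entD (jp μ X Y) (fun i : 𝒴 × 𝒳 => (i.2, g i.2)) :=
    Hent_bridge μ X Y (fun i : 𝒴 × 𝒳 => (i.2, g i.2)) hX hY
  have r3 : entD (jp μ X Y) (fun i : 𝒴 × 𝒳 => (i.1, i.2, g i.2))
      = entD (jp μ X Y) (fun i : 𝒴 × 𝒳 => i) :=
    entD_relabel (jp μ X Y) (fun i : 𝒴 × 𝒳 => i)
      (fun u : 𝒴 × 𝒳 => (u.1, u.2, g u.2))
      (fun u v h => by
        have h1 := congrArg Prod.fst h
        have h2 := congrArg (fun z : 𝒴 × 𝒳 × δ => z.2.1) h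
        exact Prod.ext h1 h2)
  have r4 : entD (jp μ X Y) (fun i : 𝒴 × 𝒳 => (i.2, g i.2))
      = entD (jp μ X Y) (fun i : 𝒴 × 𝒳 => i.2) :=
    entD_relabel (jp μ X Y) (fun i : 𝒴 × 𝒳 => i.2)
      (fun x : 𝒳 => (x, g x))
      (fun u v h => by
        have h1 := congrArg Prod.fst h
        exact h1)
  show (Hent μ (fun ω => (Y ω, g (X ω))) - Hent μ (fun ω => g (X ω)))
      - (Hent μ (fun ω => (Y ω, (X ω, g (X ω)))) - Hent μ (fun ω => (X ω, g (X ω)))) = _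
  rw [e1, e2, e3, e4, r3, r4]

end Bridge



/-- Proposition 1 of the paper.  If `Y` is not conditionally
independent of `w_{k+1}(X)` given `h_{[k]}(X)`, and `S ⊆ [k+1]` is a Markov blanket,
i.e. `Y ⊥ h_{[k+1]∖S}(X) | h_S(X)`, then
`I(Y; X | h_S(X)) = I(Y; X | h_{[k+1]}(X)) < I(Y; X | h_{[k]}(X))`. -/
theorem stmt_0 {Ω 𝒳 𝒴 𝒞 : Type*} [MeasurableSpace Ω]
    [MeasurableSpace 𝒳] [MeasurableSingletonClass 𝒳] [Fintype 𝒳]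
    [MeasurableSpace 𝒴] [MeasurableSingletonClass 𝒴] [Fintype 𝒴]
    [Fintype 𝒞]
    (μ : Measure Ω) [IsProbabilityMeasure μ]
    (X : Ω → 𝒳) (Y : Ω → 𝒴) (hX : Measurable X) (hY : Measurable Y)
    (k : ℕ) (w : Fin (k + 1) → 𝒳 → 𝒞) (S : Finset (Fin (k + 1)))
    (hnotCI : ¬ CondIndepFun μ Y (fun ω => w (Fin.last k) (X ω))
        (fun ω => fun i : Fin k => w i.castSucc (X ω)))
    (hMB : CondIndepFun μ Y (fun ω => fun i : {i : Fin (k + 1) // i ∉ S} => w i.1 (X ω))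
        (fun ω => fun i : {i : Fin (k + 1) // i ∈ S} => w i.1 (X ω))) :
    condMI μ Y X (fun ω => fun i : {i : Fin (k + 1) // i ∈ S} => w i.1 (X ω)) =
      condMI μ Y X (fun ω => fun i : Fin (k + 1) => w i (X ω)) ∧
    condMI μ Y X (fun ω => fun i : Fin (k + 1) => w i (X ω)) <
      condMI μ Y X (fun ω => fun i : Fin k => w i.castSucc (X ω)) := by
  classical
  set p : 𝒴 × 𝒳 → ℝ := jp μ X Y with hpdef
  have hp : ∀ i, 0 ≤ p i := jp_nonneg μ X Y
  have hs1 : ∑ i : 𝒴 × 𝒳, p i = 1 := jp_sum μ X Y hX hY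
  -- bridges for the three conditional mutual informations
  have b1 : condMI μ Y X (fun ω => fun i : {i : Fin (k + 1) // i ∈ S} => w i.1 (X ω)) =
      (entD p (fun i : 𝒴 × 𝒳 => (i.1, fun j : {i : Fin (k + 1) // i ∈ S} => w j.1 i.2))
        - entD p (fun i : 𝒴 × 𝒳 => fun j : {i : Fin (k + 1) // i ∈ S} => w j.1 i.2))
      - (entD p (fun i : 𝒴 × 𝒳 => i) - entD p (fun i : 𝒴 × 𝒳 => i.2)) :=
    condMI_bridge μ X Y (fun x => fun j : {i : Fin (k + 1) // i ∈ S} => w j.1 x) hX hY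
  have b2 : condMI μ Y X (fun ω => fun i : Fin (k + 1) => w i (X ω)) =
      (entD p (fun i : 𝒴 × 𝒳 => (i.1, fun j : Fin (k + 1) => w j i.2))
        - entD p (fun i : 𝒴 × 𝒳 => fun j : Fin (k + 1) => w j i.2))
      - (entD p (fun i : 𝒴 × 𝒳 => i) - entD p (fun i : 𝒴 × 𝒳 => i.2)) :=
    condMI_bridge μ X Y (fun x => fun j : Fin (k + 1) => w j x) hX hY
  have b3 : condMI μ Y X (fun ω => fun i : Fin k => w i.castSucc (X ω)) =
      (entD p (fun i : 𝒴 × 𝒳 => (i.1, fun j : Fin k => w j.castSucc i.2))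
        - entD p (fun i : 𝒴 × 𝒳 => fun j : Fin k => w j.castSucc i.2))
      - (entD p (fun i : 𝒴 × 𝒳 => i) - entD p (fun i : 𝒴 × 𝒳 => i.2)) :=
    condMI_bridge μ X Y (fun x => fun j : Fin k => w j.castSucc x) hX hY
  -- conditional independence hypotheses at the pmf level
  have hci : pmCI p (fun i : 𝒴 × 𝒳 => i.1)
      (fun i : 𝒴 × 𝒳 => fun j : {i : Fin (k + 1) // i ∉ S} => w j.1 i.2)
      (fun i : 𝒴 × 𝒳 => fun j : {i : Fin (k + 1) // i ∈ S} => w j.1 i.2) :=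
    (CI_bridge μ X Y (fun i : 𝒴 × 𝒳 => fun j : {i : Fin (k + 1) // i ∉ S} => w j.1 i.2)
      (fun i : 𝒴 × 𝒳 => fun j : {i : Fin (k + 1) // i ∈ S} => w j.1 i.2) hX hY).mp hMB
  have hnci : ¬ pmCI p (fun i : 𝒴 × 𝒳 => i.1)
      (fun i : 𝒴 × 𝒳 => w (Fin.last k) i.2)
      (fun i : 𝒴 × 𝒳 => fun j : Fin k => w j.castSucc i.2) :=
    fun h => hnotCI ((CI_bridge μ X Y (fun i : 𝒴 × 𝒳 => w (Fin.last k) i.2)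
      (fun i : 𝒴 × 𝒳 => fun j : Fin k => w j.castSucc i.2) hX hY).mpr h)
  -- core applications
  have c1 : entD p (fun i : 𝒴 × 𝒳 => (i.1,
        (fun j : {i : Fin (k + 1) // i ∉ S} => w j.1 i.2),
        (fun j : {i : Fin (k + 1) // i ∈ S} => w j.1 i.2)))
      + entD p (fun i : 𝒴 × 𝒳 => fun j : {i : Fin (k + 1) // i ∈ S} => w j.1 i.2)
      = entD p (fun i : 𝒴 × 𝒳 => (i.1, fun j : {i : Fin (k + 1) // i ∈ S} => w j.1 i.2))
      + entD p (fun i : 𝒴 × 𝒳 => ((fun j : {i : Fin (k + 1) // i ∉ S} => w j.1 i.2),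
          (fun j : {i : Fin (k + 1) // i ∈ S} => w j.1 i.2))) :=
    (core p (fun i : 𝒴 × 𝒳 => i.1)
      (fun i : 𝒴 × 𝒳 => fun j : {i : Fin (k + 1) // i ∉ S} => w j.1 i.2)
      (fun i : 𝒴 × 𝒳 => fun j : {i : Fin (k + 1) // i ∈ S} => w j.1 i.2) hp hs1).1 hci
  have c2 : entD p (fun i : 𝒴 × 𝒳 => (i.1, w (Fin.last k) i.2,
        (fun j : Fin k => w j.castSucc i.2)))
      + entD p (fun i : 𝒴 × 𝒳 => fun j : Fin k => w j.castSucc i.2)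
      < entD p (fun i : 𝒴 × 𝒳 => (i.1, fun j : Fin k => w j.castSucc i.2))
      + entD p (fun i : 𝒴 × 𝒳 => (w (Fin.last k) i.2,
          (fun j : Fin k => w j.castSucc i.2))) :=
    not_le.mp (fun hge => hnci ((core p (fun i : 𝒴 × 𝒳 => i.1)
      (fun i : 𝒴 × 𝒳 => w (Fin.last k) i.2)
      (fun i : 𝒴 × 𝒳 => fun j : Fin k => w j.castSucc i.2) hp hs1).2.1 hge))
  -- relabel lemmas
  have rel1 : entD p (fun i : 𝒴 × 𝒳 => (i.1,
        (fun j : {i : Fin (k + 1) // i ∉ S} => w j.1 i.2),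
        (fun j : {i : Fin (k + 1) // i ∈ S} => w j.1 i.2)))
      = entD p (fun i : 𝒴 × 𝒳 => (i.1, fun j : Fin (k + 1) => w j i.2)) :=
    entD_relabel p (fun i : 𝒴 × 𝒳 => (i.1, fun j : Fin (k + 1) => w j i.2))
      (fun u : 𝒴 × (Fin (k + 1) → 𝒞) =>
        (u.1, (fun j : {i : Fin (k + 1) // i ∉ S} => u.2 j.1),
          (fun j : {i : Fin (k + 1) // i ∈ S} => u.2 j.1)))
      (fun u v h => by
        have h1 := congrArg Prod.fst h
        have h2 := congrArg (fun z => z.2.1) h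
        have h3 := congrArg (fun z => z.2.2) h
        refine Prod.ext h1 (funext fun j => ?_)
        by_cases hj : j ∈ S
        · exact congrFun h3 ⟨j, hj⟩
        · exact congrFun h2 ⟨j, hj⟩)
  have rel2 : entD p (fun i : 𝒴 × 𝒳 => ((fun j : {i : Fin (k + 1) // i ∉ S} => w j.1 i.2),
        (fun j : {i : Fin (k + 1) // i ∈ S} => w j.1 i.2)))
      = entD p (fun i : 𝒴 × 𝒳 => fun j : Fin (k + 1) => w j i.2) :=
    entD_relabel p (fun i : 𝒴 × 𝒳 => fun j : Fin (k + 1) => w j i.2)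
      (fun u : Fin (k + 1) → 𝒞 =>
        ((fun j : {i : Fin (k + 1) // i ∉ S} => u j.1),
          (fun j : {i : Fin (k + 1) // i ∈ S} => u j.1)))
      (fun u v h => by
        have h2 := congrArg (fun z => z.1) h
        have h3 := congrArg (fun z => z.2) h
        refine funext fun j => ?_
        by_cases hj : j ∈ S
        · exact congrFun h3 ⟨j, hj⟩
        · exact congrFun h2 ⟨j, hj⟩)
  have rel3 : entD p (fun i : 𝒴 × 𝒳 => (i.1, w (Fin.last k) i.2,
        (fun j : Fin k => w j.castSucc i.2)))
      = entD p (fun i : 𝒴 × 𝒳 => (i.1, fun j : Fin (k + 1) => w j i.2)) :=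
    entD_relabel p (fun i : 𝒴 × 𝒳 => (i.1, fun j : Fin (k + 1) => w j i.2))
      (fun u : 𝒴 × (Fin (k + 1) → 𝒞) =>
        (u.1, u.2 (Fin.last k), fun j : Fin k => u.2 j.castSucc))
      (fun u v h => by
        have h1 := congrArg Prod.fst h
        have h2 := congrArg (fun z => z.2.1) h
        have h3 := congrArg (fun z => z.2.2) h
        refine Prod.ext h1 (funext fun j => ?_)
        refine Fin.lastCases ?_ (fun i => ?_) j
        · exact h2
        · exact congrFun h3 i)
  have rel4 : entD p (fun i : 𝒴 × 𝒳 => (w (Fin.last k) i.2,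
        (fun j : Fin k => w j.castSucc i.2)))
      = entD p (fun i : 𝒴 × 𝒳 => fun j : Fin (k + 1) => w j i.2) :=
    entD_relabel p (fun i : 𝒴 × 𝒳 => fun j : Fin (k + 1) => w j i.2)
      (fun u : Fin (k + 1) → 𝒞 => (u (Fin.last k), fun j : Fin k => u j.castSucc))
      (fun u v h => by
        have h2 := congrArg (fun z => z.1) h
        have h3 := congrArg (fun z => z.2) h
        refine funext fun j => ?_
        refine Fin.lastCases ?_ (fun i => ?_) j
        · exact h2
        · exact congrFun h3 i)
  constructor
  · rw [b1, b2]
    linarith [c1, rel1, rel2]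
  · rw [b2, b3]
    linarith [c2, rel3, rel4]
end

section
/- Let X and Y be random variables on a probability space taking values in finite sets 𝒳 and 𝒴, and let w_1, …, w_{k+1} : 𝒳 → 𝒞 be functions, with h_S(X) := (w_i(X))_{i∈S} for S ⊆ {1,…,k+1} and [j] := {1,…,j}. If S ⊆ [k+1] satisfies the Markov-blanket condition Y ⊥ h_{[k+1]∖S}(X) | h_S(X), then I(Y; X | h_S(X)) = I(Y; X | h_{[k+1]}(X)). -/
open MeasureTheory

/-- Entropy is invariant under composing with an injective map. -/
lemma hent_comp_inj {Ω α β : Type*} [MeasurableSpace Ω] [Fintype α] [Fintype β]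
    (μ : Measure Ω) (T : Ω → α) (u : α → β) (hu : Function.Injective u) :
    Hent μ (fun ω => u (T ω)) = Hent μ T := by
  classical
  unfold Hent
  congr 1
  set F : β → ℝ := fun b => (μ ((fun ω => u (T ω)) ⁻¹' {b})).toReal *
      Real.log (μ ((fun ω => u (T ω)) ⁻¹' {b})).toReal with hF
  have h1 : ∑ b : β, F b = ∑ b ∈ Finset.univ.image u, F b := by
    refine (Finset.sum_subset (Finset.subset_univ _) ?_).symm
    intro b _ hb
    have : (fun ω => u (T ω)) ⁻¹' {b} = ∅ := by
      ext ω
      simp only [Set.mem_preimage, Set.mem_singleton_iff, Set.mem_empty_iff_false, iff_false]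
      intro h
      exact hb (Finset.mem_image.2 ⟨T ω, Finset.mem_univ _, h⟩)
    simp [hF, this]
  rw [h1, Finset.sum_image (fun a _ a' _ h => hu h)]
  apply Finset.sum_congr rfl
  intro a _
  have : (fun ω => u (T ω)) ⁻¹' {u a} = T ⁻¹' {a} := by
    ext ω; simp [hu.eq_iff]
  simp only [hF, this]

/-- Purely arithmetic core of the conditional-independence entropy identity. -/
lemma key_sum {A B C : Type*} [Fintype A] [Fintype B] [Fintype C]
    (p : A → B → C → ℝ) (q : C → ℝ) (r : A → C → ℝ) (s : B → C → ℝ)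
    (hp : ∀ a b c, 0 ≤ p a b c)
    (hpr : ∀ a b c, p a b c ≤ r a c) (hps : ∀ a b c, p a b c ≤ s b c)
    (hpq : ∀ a b c, p a b c ≤ q c)
    (hr : ∀ a c, r a c = ∑ b, p a b c) (hs : ∀ b c, s b c = ∑ a, p a b c)
    (hq : ∀ c, q c = ∑ a, ∑ b, p a b c)
    (hci : ∀ a b c, p a b c * q c = r a c * s b c) :
    (∑ a, ∑ b, ∑ c, p a b c * Real.log (p a b c)) + ∑ c, q c * Real.log (q c)
    = (∑ a, ∑ c, r a c * Real.log (r a c)) + ∑ b, ∑ c, s b c * Real.log (s b c) := by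
  have eq : ∑ c, q c * Real.log (q c) = ∑ a, ∑ b, ∑ c, p a b c * Real.log (q c) := by
    calc ∑ c, q c * Real.log (q c) = ∑ c, ∑ a, ∑ b, p a b c * Real.log (q c) := by
          refine Finset.sum_congr rfl fun c _ => ?_
          rw [hq]; simp [Finset.sum_mul]
      _ = ∑ a, ∑ c, ∑ b, p a b c * Real.log (q c) := Finset.sum_comm
      _ = ∑ a, ∑ b, ∑ c, p a b c * Real.log (q c) :=
          Finset.sum_congr rfl fun a _ => Finset.sum_comm
  have er : ∑ a, ∑ c, r a c * Real.log (r a c)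
      = ∑ a, ∑ b, ∑ c, p a b c * Real.log (r a c) := by
    refine Finset.sum_congr rfl fun a _ => ?_
    calc ∑ c, r a c * Real.log (r a c) = ∑ c, ∑ b, p a b c * Real.log (r a c) := by
          refine Finset.sum_congr rfl fun c _ => ?_
          rw [hr]; simp [Finset.sum_mul]
      _ = ∑ b, ∑ c, p a b c * Real.log (r a c) := Finset.sum_comm
  have es : ∑ b, ∑ c, s b c * Real.log (s b c)
      = ∑ a, ∑ b, ∑ c, p a b c * Real.log (s b c) := by
    calc ∑ b, ∑ c, s b c * Real.log (s b c)
        = ∑ b, ∑ c, ∑ a, p a b c * Real.log (s b c) := by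
          refine Finset.sum_congr rfl fun b _ => Finset.sum_congr rfl fun c _ => ?_
          rw [hs]; simp [Finset.sum_mul]
      _ = ∑ b, ∑ a, ∑ c, p a b c * Real.log (s b c) :=
          Finset.sum_congr rfl fun b _ => Finset.sum_comm
      _ = ∑ a, ∑ b, ∑ c, p a b c * Real.log (s b c) := Finset.sum_comm
  rw [eq, er, es, ← Finset.sum_add_distrib, ← Finset.sum_add_distrib]
  refine Finset.sum_congr rfl fun a _ => ?_
  rw [← Finset.sum_add_distrib, ← Finset.sum_add_distrib]
  refine Finset.sum_congr rfl fun b _ => ?_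
  rw [← Finset.sum_add_distrib, ← Finset.sum_add_distrib]
  refine Finset.sum_congr rfl fun c _ => ?_
  rcases eq_or_lt_of_le (hp a b c) with h0 | h0
  · simp [← h0]
  · have hrpos : 0 < r a c := lt_of_lt_of_le h0 (hpr a b c)
    have hspos : 0 < s b c := lt_of_lt_of_le h0 (hps a b c)
    have hqpos : 0 < q c := lt_of_lt_of_le h0 (hpq a b c)
    have hlog : Real.log (p a b c) + Real.log (q c)
        = Real.log (r a c) + Real.log (s b c) := by
      rw [← Real.log_mul h0.ne' hqpos.ne', ← Real.log_mul hrpos.ne' hspos.ne', hci]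
    have := congrArg (p a b c * ·) hlog
    simpa [mul_add] using this

/-- Conditional independence `Y ⊥ W | Z` implies `H(Y | (W, Z)) = H(Y | Z)`. -/
lemma condHent_of_condIndep {Ω α β γ : Type*} [MeasurableSpace Ω]
    [Fintype α] [Fintype β] [Fintype γ]
    (μ : Measure Ω) [IsProbabilityMeasure μ] (Y : Ω → α) (W : Ω → β) (Z : Ω → γ)
    (hYm : ∀ a : α, MeasurableSet {ω | Y ω = a})
    (hWm : ∀ b : β, MeasurableSet {ω | W ω = b})
    (hZm : ∀ c : γ, MeasurableSet {ω | Z ω = c})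
    (h : CondIndepFun μ Y W Z) :
    condHent μ Y (fun ω => (W ω, Z ω)) = condHent μ Y Z := by
  classical
  set p : α → β → γ → ℝ := fun a b c => (μ {ω | Y ω = a ∧ W ω = b ∧ Z ω = c}).toReal with hpdef
  set q : γ → ℝ := fun c => (μ {ω | Z ω = c}).toReal with hqdef
  set r : α → γ → ℝ := fun a c => (μ {ω | Y ω = a ∧ Z ω = c}).toReal with hrdef
  set s : β → γ → ℝ := fun b c => (μ {ω | W ω = b ∧ Z ω = c}).toReal with hsdef
  have hmp : ∀ (a : α) (b : β) (c : γ), MeasurableSet {ω | Y ω = a ∧ W ω = b ∧ Z ω = c} :=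
    fun a b c => (hYm a).inter ((hWm b).inter (hZm c))
  have hr : ∀ a c, r a c = ∑ b, p a b c := by
    intro a c
    have hset : {ω | Y ω = a ∧ Z ω = c} = ⋃ b, {ω | Y ω = a ∧ W ω = b ∧ Z ω = c} := by
      ext ω; simp
    have hm : μ {ω | Y ω = a ∧ Z ω = c} = ∑ b, μ {ω | Y ω = a ∧ W ω = b ∧ Z ω = c} := by
      rw [hset, measure_iUnion ?_ (fun b => hmp a b c), tsum_fintype]
      intro b b' hbb'
      simp only [Function.onFun, Set.disjoint_left]
      rintro ω ⟨_, hb, _⟩ ⟨_, hb', _⟩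
      exact hbb' (hb ▸ hb')
    simp only [hrdef, hpdef, hm]
    exact ENNReal.toReal_sum (fun b _ => measure_ne_top μ _)
  have hs : ∀ b c, s b c = ∑ a, p a b c := by
    intro b c
    have hset : {ω | W ω = b ∧ Z ω = c} = ⋃ a, {ω | Y ω = a ∧ W ω = b ∧ Z ω = c} := by
      ext ω; simp
    have hm : μ {ω | W ω = b ∧ Z ω = c} = ∑ a, μ {ω | Y ω = a ∧ W ω = b ∧ Z ω = c} := by
      rw [hset, measure_iUnion ?_ (fun a => hmp a b c), tsum_fintype]
      intro a a' haa'
      simp only [Function.onFun, Set.disjoint_left]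
      rintro ω ⟨ha, _, _⟩ ⟨ha', _, _⟩
      exact haa' (ha ▸ ha')
    simp only [hsdef, hpdef, hm]
    exact ENNReal.toReal_sum (fun a _ => measure_ne_top μ _)
  have hq : ∀ c, q c = ∑ a, ∑ b, p a b c := by
    intro c
    have hset : {ω | Z ω = c} = ⋃ a, {ω | Y ω = a ∧ Z ω = c} := by
      ext ω; simp
    have hm : μ {ω | Z ω = c} = ∑ a, μ {ω | Y ω = a ∧ Z ω = c} := by
      have hmA : ∀ a : α, MeasurableSet {ω | Y ω = a ∧ Z ω = c} :=
        fun a => (hYm a).inter (hZm c)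
      rw [hset, measure_iUnion ?_ hmA, tsum_fintype]
      intro a a' haa'
      simp only [Function.onFun, Set.disjoint_left]
      rintro ω ⟨ha, _⟩ ⟨ha', _⟩
      exact haa' (ha ▸ ha')
    have : q c = ∑ a, r a c := by
      simp only [hqdef, hrdef, hm]
      exact ENNReal.toReal_sum (fun a _ => measure_ne_top μ _)
    rw [this]
    exact Finset.sum_congr rfl fun a _ => hr a c
  have hmono : ∀ {s t : Set Ω}, s ⊆ t → (μ s).toReal ≤ (μ t).toReal :=
    fun hst => ENNReal.toReal_mono (measure_ne_top μ _) (measure_mono hst)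
  have hp0 : ∀ a b c, 0 ≤ p a b c := fun a b c => ENNReal.toReal_nonneg
  have hpr : ∀ a b c, p a b c ≤ r a c :=
    fun a b c => hmono (fun ω hω => ⟨hω.1, hω.2.2⟩)
  have hps : ∀ a b c, p a b c ≤ s b c :=
    fun a b c => hmono (fun ω hω => ⟨hω.2.1, hω.2.2⟩)
  have hpq : ∀ a b c, p a b c ≤ q c :=
    fun a b c => hmono (fun ω hω => hω.2.2)
  have key := key_sum p q r s hp0 hpr hps hpq hr hs hq h
  have H1 : Hent μ (fun ω => (Y ω, W ω, Z ω))
      = -∑ a, ∑ b, ∑ c, p a b c * Real.log (p a b c) := by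
    unfold Hent
    congr 1
    rw [Fintype.sum_prod_type]
    refine Finset.sum_congr rfl fun a _ => ?_
    rw [Fintype.sum_prod_type]
    refine Finset.sum_congr rfl fun b _ => Finset.sum_congr rfl fun c _ => ?_
    have : (fun ω => (Y ω, W ω, Z ω)) ⁻¹' {(a, b, c)} = {ω | Y ω = a ∧ W ω = b ∧ Z ω = c} := by
      ext ω; simp [Prod.ext_iff]
    rw [this]
  have H2 : Hent μ (fun ω => (W ω, Z ω)) = -∑ b, ∑ c, s b c * Real.log (s b c) := by
    unfold Hent
    congr 1
    rw [Fintype.sum_prod_type]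
    refine Finset.sum_congr rfl fun b _ => Finset.sum_congr rfl fun c _ => ?_
    have : (fun ω => (W ω, Z ω)) ⁻¹' {(b, c)} = {ω | W ω = b ∧ Z ω = c} := by
      ext ω; simp [Prod.ext_iff]
    rw [this]
  have H3 : Hent μ (fun ω => (Y ω, Z ω)) = -∑ a, ∑ c, r a c * Real.log (r a c) := by
    unfold Hent
    congr 1
    rw [Fintype.sum_prod_type]
    refine Finset.sum_congr rfl fun a _ => Finset.sum_congr rfl fun c _ => ?_
    have : (fun ω => (Y ω, Z ω)) ⁻¹' {(a, c)} = {ω | Y ω = a ∧ Z ω = c} := by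
      ext ω; simp [Prod.ext_iff]
    rw [this]
  have H4 : Hent μ Z = -∑ c, q c * Real.log (q c) := rfl
  unfold condHent
  rw [H1, H2, H3, H4]
  linarith [key]

/-- Conditional entropy is invariant under composing the conditioning variable
with an injective map. -/
lemma condHent_comp_inj {Ω α β δ : Type*} [MeasurableSpace Ω]
    [Fintype α] [Fintype β] [Fintype δ]
    (μ : Measure Ω) (Y : Ω → α) (T : Ω → β) (u : β → δ) (hu : Function.Injective u) :
    condHent μ Y (fun ω => u (T ω)) = condHent μ Y T := by
  unfold condHent
  congr 1
  · exact hent_comp_inj μ (fun ω => (Y ω, T ω))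
      (Prod.map id u) (Function.injective_id.prodMap hu)
  · exact hent_comp_inj μ T u hu

/-- If `S ⊆ [k+1]` satisfies the Markov-blanket condition
`Y ⊥ h_{[k+1]∖S}(X) | h_S(X)`, then `I(Y; X | h_S(X)) = I(Y; X | h_{[k+1]}(X))`. -/
theorem stmt_1 {Ω 𝒳 𝒴 𝒞 : Type*} [MeasurableSpace Ω]
    [MeasurableSpace 𝒳] [MeasurableSingletonClass 𝒳] [Fintype 𝒳]
    [MeasurableSpace 𝒴] [MeasurableSingletonClass 𝒴] [Fintype 𝒴]
    [Fintype 𝒞]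
    (μ : Measure Ω) [IsProbabilityMeasure μ]
    (X : Ω → 𝒳) (Y : Ω → 𝒴) (hX : Measurable X) (hY : Measurable Y)
    (k : ℕ) (w : Fin (k + 1) → 𝒳 → 𝒞) (S : Finset (Fin (k + 1)))
    (hMB : CondIndepFun μ Y (fun ω => fun i : {i : Fin (k + 1) // i ∉ S} => w i.1 (X ω))
        (fun ω => fun i : {i : Fin (k + 1) // i ∈ S} => w i.1 (X ω))) :
    condMI μ Y X (fun ω => fun i : {i : Fin (k + 1) // i ∈ S} => w i.1 (X ω)) =
      condMI μ Y X (fun ω => fun i : Fin (k + 1) => w i (X ω)) := by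
  -- the splitting map is injective
  have hv : Function.Injective (fun c : Fin (k + 1) → 𝒞 =>
      ((fun i : {i : Fin (k + 1) // i ∉ S} => c i.1,
        fun i : {i : Fin (k + 1) // i ∈ S} => c i.1) :
        ({i : Fin (k + 1) // i ∉ S} → 𝒞) × ({i : Fin (k + 1) // i ∈ S} → 𝒞))) := by
    intro c c' hcc'
    rw [Prod.mk.injEq] at hcc'
    funext i
    by_cases hi : i ∈ S
    · exact congrFun hcc'.2 ⟨i, hi⟩
    · exact congrFun hcc'.1 ⟨i, hi⟩
  -- Step A : conditioning on (X, f(X)) is the same as conditioning on X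
  have hA1 : condHent μ Y
      (fun ω => (X ω, fun i : {i : Fin (k + 1) // i ∈ S} => w i.1 (X ω)))
      = condHent μ Y X :=
    condHent_comp_inj μ Y X
      (fun x => (x, fun i : {i : Fin (k + 1) // i ∈ S} => w i.1 x))
      (fun a b hab => congrArg Prod.fst hab)
  have hA2 : condHent μ Y
      (fun ω => (X ω, fun i : Fin (k + 1) => w i (X ω)))
      = condHent μ Y X :=
    condHent_comp_inj μ Y X
      (fun x => (x, fun i : Fin (k + 1) => w i x))
      (fun a b hab => congrArg Prod.fst hab)
  -- measurability of the level sets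
  have hYm : ∀ a : 𝒴, MeasurableSet {ω | Y ω = a} :=
    fun a => hY (measurableSet_singleton a)
  have hWm : ∀ b : {i : Fin (k + 1) // i ∉ S} → 𝒞,
      MeasurableSet {ω | (fun i : {i : Fin (k + 1) // i ∉ S} => w i.1 (X ω)) = b} := by
    intro b
    have : {ω | (fun i : {i : Fin (k + 1) // i ∉ S} => w i.1 (X ω)) = b}
        = X ⁻¹' {x | (fun i : {i : Fin (k + 1) // i ∉ S} => w i.1 x) = b} := rfl
    rw [this]
    exact hX ((Set.toFinite _).measurableSet)
  have hZm : ∀ c : {i : Fin (k + 1) // i ∈ S} → 𝒞,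
      MeasurableSet {ω | (fun i : {i : Fin (k + 1) // i ∈ S} => w i.1 (X ω)) = c} := by
    intro c
    have : {ω | (fun i : {i : Fin (k + 1) // i ∈ S} => w i.1 (X ω)) = c}
        = X ⁻¹' {x | (fun i : {i : Fin (k + 1) // i ∈ S} => w i.1 x) = c} := rfl
    rw [this]
    exact hX ((Set.toFinite _).measurableSet)
  -- Step B : H(Y | h_S(X)) = H(Y | h_{[k+1]}(X))
  have hB1 : condHent μ Y
      (fun ω => ((fun i : {i : Fin (k + 1) // i ∉ S} => w i.1 (X ω)),
                 (fun i : {i : Fin (k + 1) // i ∈ S} => w i.1 (X ω))))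
      = condHent μ Y (fun ω => fun i : {i : Fin (k + 1) // i ∈ S} => w i.1 (X ω)) :=
    condHent_of_condIndep μ Y
      (fun ω => fun i : {i : Fin (k + 1) // i ∉ S} => w i.1 (X ω))
      (fun ω => fun i : {i : Fin (k + 1) // i ∈ S} => w i.1 (X ω))
      hYm hWm hZm hMB
  have hB2 : condHent μ Y
      (fun ω => ((fun i : {i : Fin (k + 1) // i ∉ S} => w i.1 (X ω)),
                 (fun i : {i : Fin (k + 1) // i ∈ S} => w i.1 (X ω))))
      = condHent μ Y (fun ω => fun i : Fin (k + 1) => w i (X ω)) :=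
    condHent_comp_inj μ Y (fun ω => fun i : Fin (k + 1) => w i (X ω))
      (fun c : Fin (k + 1) → 𝒞 =>
        ((fun i : {i : Fin (k + 1) // i ∉ S} => c i.1,
          fun i : {i : Fin (k + 1) // i ∈ S} => c i.1) :
          ({i : Fin (k + 1) // i ∉ S} → 𝒞) × ({i : Fin (k + 1) // i ∈ S} → 𝒞))) hv
  show condHent μ Y (fun ω => fun i : {i : Fin (k + 1) // i ∈ S} => w i.1 (X ω))
      - condHent μ Y (fun ω => (X ω, fun i : {i : Fin (k + 1) // i ∈ S} => w i.1 (X ω)))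
    = condHent μ Y (fun ω => fun i : Fin (k + 1) => w i (X ω))
      - condHent μ Y (fun ω => (X ω, fun i : Fin (k + 1) => w i (X ω)))
  rw [hA1, hA2, ← hB1, hB2]
end

section
/- Let X and Y be random variables on a probability space taking values in finite sets 𝒳 and 𝒴, and let w_1, …, w_{k+1} : 𝒳 → 𝒞 be functions, with h_S(X) := (w_i(X))_{i∈S} for S ⊆ {1,…,k+1} and [j] := {1,…,j}. If Y is NOT conditionally independent of w_{k+1}(X) given h_{[k]}(X), then I(Y; X | h_{[k+1]}(X)) < I(Y; X | h_{[k]}(X)), i.e., adding the new factor w_{k+1} strictly decreases the conditional mutual information between Y and X. -/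
open MeasureTheory

private lemma hent_comp_injective {Ω α β : Type*} [MeasurableSpace Ω] [Fintype α] [Fintype β]
    (μ : Measure Ω) (T : Ω → α) (g : α → β) (hg : Function.Injective g) :
    Hent μ (fun ω => g (T ω)) = Hent μ T := by
  classical
  have h1 : ∀ a : α, (fun ω => g (T ω)) ⁻¹' {g a} = T ⁻¹' {a} := fun a => by
    ext ω; simp [hg.eq_iff]
  unfold Hent
  congr 1
  rw [← Finset.sum_subset (Finset.subset_univ (Finset.univ.image g))]
  · rw [Finset.sum_image (fun x _ y _ h => hg h)]
    refine Finset.sum_congr rfl fun a _ => ?_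
    rw [h1 a]
  · intro b _ hb
    have he : (fun ω => g (T ω)) ⁻¹' {b} = ∅ := by
      ext ω
      simp only [Set.mem_preimage, Set.mem_singleton_iff, Set.mem_empty_iff_false, iff_false]
      intro h; exact hb (Finset.mem_image.mpr ⟨T ω, Finset.mem_univ _, h⟩)
    simp [he]

private lemma ptwise_le (P Yv Wv Zv : ℝ) (hP : 0 ≤ P) (hPY : P ≤ Yv) (hPW : P ≤ Wv)
    (hYZ : Yv ≤ Zv) :
    P - (if Zv = 0 then 0 else Yv * Wv / Zv) ≤
      P * Real.log P + P * Real.log Zv - P * Real.log Yv - P * Real.log Wv := by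
  have hYn : 0 ≤ Yv := le_trans hP hPY
  have hWn : 0 ≤ Wv := le_trans hP hPW
  have hZn : 0 ≤ Zv := le_trans hYn hYZ
  rcases eq_or_lt_of_le hP with h0 | h0
  · rw [← h0]
    split_ifs with h
    · simp
    · have : 0 ≤ Yv * Wv / Zv := by positivity
      simp only [zero_mul, add_zero, sub_zero, zero_sub, neg_nonpos]
      linarith
  · have hYp : 0 < Yv := lt_of_lt_of_le h0 hPY
    have hWp : 0 < Wv := lt_of_lt_of_le h0 hPW
    have hZp : 0 < Zv := lt_of_lt_of_le hYp hYZ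
    rw [if_neg (ne_of_gt hZp)]
    have hx : 0 < Yv * Wv / (Zv * P) := by positivity
    have hlog := Real.log_le_sub_one_of_pos hx
    rw [Real.log_div (by positivity) (by positivity),
        Real.log_mul (ne_of_gt hYp) (ne_of_gt hWp),
        Real.log_mul (ne_of_gt hZp) (ne_of_gt h0)] at hlog
    have h2 := mul_le_mul_of_nonneg_left hlog hP
    have h3 : P * (Yv * Wv / (Zv * P) - 1) = Yv * Wv / Zv - P := by
      field_simp
    nlinarith [h2]

private lemma ptwise_lt (P Yv Wv Zv : ℝ) (hP : 0 ≤ P) (hPY : P ≤ Yv) (hPW : P ≤ Wv)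
    (hYZ : Yv ≤ Zv) (hne : P * Zv ≠ Yv * Wv) :
    P - (if Zv = 0 then 0 else Yv * Wv / Zv) <
      P * Real.log P + P * Real.log Zv - P * Real.log Yv - P * Real.log Wv := by
  have hYn : 0 ≤ Yv := le_trans hP hPY
  have hWn : 0 ≤ Wv := le_trans hP hPW
  rcases eq_or_lt_of_le hP with h0 | h0
  · rw [← h0] at hne ⊢
    have hYW : 0 < Yv * Wv := by
      rcases (mul_nonneg hYn hWn).lt_or_eq with h | h
      · exact h
      · exact absurd h.symm (by simpa using hne)
    have hYp : 0 < Yv := lt_of_le_of_ne hYn (by rintro rfl; simp at hYW)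
    have hWp : 0 < Wv := lt_of_le_of_ne hWn (by rintro rfl; simp at hYW)
    have hZp : 0 < Zv := lt_of_lt_of_le hYp hYZ
    rw [if_neg (ne_of_gt hZp)]
    have : 0 < Yv * Wv / Zv := by positivity
    simp only [zero_mul, add_zero, sub_zero, zero_sub, neg_lt, neg_zero]
    linarith
  · have hYp : 0 < Yv := lt_of_lt_of_le h0 hPY
    have hWp : 0 < Wv := lt_of_lt_of_le h0 hPW
    have hZp : 0 < Zv := lt_of_lt_of_le hYp hYZ
    rw [if_neg (ne_of_gt hZp)]
    have hx : 0 < Yv * Wv / (Zv * P) := by positivity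
    have hx1 : Yv * Wv / (Zv * P) ≠ 1 := by
      intro h
      rw [div_eq_iff (by positivity : Zv * P ≠ 0), one_mul] at h
      exact hne (by rw [mul_comm]; exact h.symm)
    have hlog := Real.log_lt_sub_one_of_pos hx hx1
    rw [Real.log_div (by positivity) (by positivity),
        Real.log_mul (ne_of_gt hYp) (ne_of_gt hWp),
        Real.log_mul (ne_of_gt hZp) (ne_of_gt h0)] at hlog
    have h2 := mul_lt_mul_of_pos_left hlog h0
    have h3 : P * (Yv * Wv / (Zv * P) - 1) = Yv * Wv / Zv - P := by
      field_simp
    nlinarith [h2]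

private lemma sum_rotate {α β γ : Type*} [Fintype α] [Fintype β] [Fintype γ]
    (f : α → β → γ → ℝ) :
    ∑ a, ∑ b, ∑ c, f a b c = ∑ c, ∑ a, ∑ b, f a b c := by
  calc ∑ a, ∑ b, ∑ c, f a b c
      = ∑ a, ∑ c, ∑ b, f a b c := Finset.sum_congr rfl fun a _ => Finset.sum_comm
    _ = ∑ c, ∑ a, ∑ b, f a b c := Finset.sum_comm

private lemma core_lt {α β γ : Type*} [Fintype α] [Fintype β] [Fintype γ]
    (p : α → β → γ → ℝ) (hp : ∀ a b c, 0 ≤ p a b c)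
    (hne : ∃ a b c, p a b c * (∑ a', ∑ b', p a' b' c) ≠
        (∑ b', p a b' c) * (∑ a', p a' b c)) :
    (∑ a, ∑ c, (∑ b, p a b c) * Real.log (∑ b, p a b c)) +
      (∑ b, ∑ c, (∑ a, p a b c) * Real.log (∑ a, p a b c)) <
    (∑ a, ∑ b, ∑ c, p a b c * Real.log (p a b c)) +
      (∑ c, (∑ a, ∑ b, p a b c) * Real.log (∑ a, ∑ b, p a b c)) := by
  classical
  set pY : α → γ → ℝ := fun a c => ∑ b, p a b c with hpY
  set pW : β → γ → ℝ := fun b c => ∑ a, p a b c with hpW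
  set pZ : γ → ℝ := fun c => ∑ a, ∑ b, p a b c with hpZ
  set t : α → β → γ → ℝ := fun a b c =>
    p a b c * Real.log (p a b c) + p a b c * Real.log (pZ c)
      - p a b c * Real.log (pY a c) - p a b c * Real.log (pW b c) with ht
  set r : α → β → γ → ℝ := fun a b c =>
    if pZ c = 0 then 0 else pY a c * pW b c / pZ c with hr
  -- basic bounds
  have hYnn : ∀ a c, 0 ≤ pY a c := fun a c => Finset.sum_nonneg fun b _ => hp a b c
  have hWnn : ∀ b c, 0 ≤ pW b c := fun b c => Finset.sum_nonneg fun a _ => hp a b c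
  have hPY : ∀ a b c, p a b c ≤ pY a c := fun a b c =>
    Finset.single_le_sum (fun b' _ => hp a b' c) (Finset.mem_univ b)
  have hPW : ∀ a b c, p a b c ≤ pW b c := fun a b c =>
    Finset.single_le_sum (fun a' _ => hp a' b c) (Finset.mem_univ a)
  have hYZ : ∀ a c, pY a c ≤ pZ c := fun a c =>
    Finset.single_le_sum (fun a' _ => hYnn a' c) (Finset.mem_univ a)
  -- (f1)
  have e1 : ∑ a, ∑ b, ∑ c, p a b c * Real.log (pZ c)
      = ∑ c, pZ c * Real.log (pZ c) := by
    rw [sum_rotate]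
    refine Finset.sum_congr rfl fun c _ => ?_
    rw [hpZ]
    simp only [Finset.sum_mul]
  have e2 : ∑ a, ∑ b, ∑ c, p a b c * Real.log (pY a c)
      = ∑ a, ∑ c, pY a c * Real.log (pY a c) := by
    refine Finset.sum_congr rfl fun a _ => ?_
    rw [Finset.sum_comm]
    refine Finset.sum_congr rfl fun c _ => ?_
    rw [hpY]
    simp only [Finset.sum_mul]
  have e3 : ∑ a, ∑ b, ∑ c, p a b c * Real.log (pW b c)
      = ∑ b, ∑ c, pW b c * Real.log (pW b c) := by
    calc ∑ a, ∑ b, ∑ c, p a b c * Real.log (pW b c)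
        = ∑ c, ∑ a, ∑ b, p a b c * Real.log (pW b c) := sum_rotate _
      _ = ∑ c, ∑ b, ∑ a, p a b c * Real.log (pW b c) :=
          Finset.sum_congr rfl fun c _ => Finset.sum_comm
      _ = ∑ c, ∑ b, pW b c * Real.log (pW b c) := by
          refine Finset.sum_congr rfl fun c _ => Finset.sum_congr rfl fun b _ => ?_
          rw [hpW]; simp only [Finset.sum_mul]
      _ = ∑ b, ∑ c, pW b c * Real.log (pW b c) := Finset.sum_comm
  have f1 : ∑ a, ∑ b, ∑ c, t a b c
      = (∑ a, ∑ b, ∑ c, p a b c * Real.log (p a b c)) + (∑ c, pZ c * Real.log (pZ c))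
        - (∑ a, ∑ c, pY a c * Real.log (pY a c)) - (∑ b, ∑ c, pW b c * Real.log (pW b c)) := by
    rw [ht]
    simp only [Finset.sum_sub_distrib, Finset.sum_add_distrib]
    rw [e1, e2, e3]
  -- (f2)
  have f2 : ∑ a, ∑ b, ∑ c, r a b c = ∑ a, ∑ b, ∑ c, p a b c := by
    rw [sum_rotate r, sum_rotate p]
    refine Finset.sum_congr rfl fun c _ => ?_
    by_cases h : pZ c = 0
    · simp only [hr, if_pos h, Finset.sum_const_zero]
      exact h.symm
    · have hb : (∑ b, pW b c) = pZ c := by rw [hpZ]; exact (Finset.sum_comm)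
      have ha : (∑ a, pY a c) = pZ c := rfl
      simp only [hr, if_neg h]
      calc ∑ a, ∑ b, pY a c * pW b c / pZ c
          = ∑ a, pY a c * (∑ b, pW b c) / pZ c := by
            refine Finset.sum_congr rfl fun a _ => ?_
            rw [Finset.mul_sum, Finset.sum_div]
        _ = (∑ a, pY a c) * (∑ b, pW b c) / pZ c := by
            rw [Finset.sum_mul, Finset.sum_div]
        _ = pZ c := by rw [ha, hb]; field_simp
  -- (f3)
  have key : ∀ a b c, p a b c - r a b c ≤ t a b c := by
    intro a b c
    exact ptwise_le (p a b c) (pY a c) (pW b c) (pZ c) (hp a b c) (hPY a b c) (hPW a b c) (hYZ a c)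
  obtain ⟨a₀, b₀, c₀, hne₀⟩ := hne
  have keylt : p a₀ b₀ c₀ - r a₀ b₀ c₀ < t a₀ b₀ c₀ :=
    ptwise_lt _ _ _ _ (hp a₀ b₀ c₀) (hPY a₀ b₀ c₀) (hPW a₀ b₀ c₀) (hYZ a₀ c₀) hne₀
  have f3 : ∑ a, ∑ b, ∑ c, (p a b c - r a b c) < ∑ a, ∑ b, ∑ c, t a b c := by
    have h1 : ∑ x : α × β × γ, (p x.1 x.2.1 x.2.2 - r x.1 x.2.1 x.2.2)
        < ∑ x : α × β × γ, t x.1 x.2.1 x.2.2 :=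
      Finset.sum_lt_sum (fun x _ => key x.1 x.2.1 x.2.2)
        ⟨(a₀, b₀, c₀), Finset.mem_univ _, keylt⟩
    have conv1 : ∀ f : α → β → γ → ℝ,
        ∑ x : α × β × γ, f x.1 x.2.1 x.2.2 = ∑ a, ∑ b, ∑ c, f a b c := by
      intro f
      rw [Fintype.sum_prod_type]
      refine Finset.sum_congr rfl fun a _ => ?_
      rw [Fintype.sum_prod_type]
    rw [← conv1 (fun a b c => p a b c - r a b c), ← conv1 t]
    exact h1
  have f4 : ∑ a, ∑ b, ∑ c, (p a b c - r a b c) = 0 := by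
    simp only [Finset.sum_sub_distrib]
    rw [f2]; ring
  rw [f4] at f3
  linarith [f1, f3]

private lemma toReal_measure_iUnion {Ω ι : Type*} [MeasurableSpace Ω] [Fintype ι]
    (μ : Measure Ω) [IsFiniteMeasure μ] (s : Set Ω) (f : ι → Set Ω)
    (hs : s = ⋃ i, f i) (hd : Pairwise (Function.onFun Disjoint f))
    (hm : ∀ i, MeasurableSet (f i)) :
    (μ s).toReal = ∑ i, (μ (f i)).toReal := by
  rw [hs, measure_iUnion hd hm, tsum_fintype,
      ENNReal.toReal_sum (fun i _ => measure_ne_top μ _)]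


set_option maxHeartbeats 2000000 in
/-- If `Y` is not conditionally independent of `w_{k+1}(X)` given
`h_{[k]}(X)`, then `I(Y; X | h_{[k+1]}(X)) < I(Y; X | h_{[k]}(X))`: adding the new
factor `w_{k+1}` strictly decreases the conditional mutual information. -/
theorem stmt_2 {Ω 𝒳 𝒴 𝒞 : Type*} [MeasurableSpace Ω]
    [MeasurableSpace 𝒳] [MeasurableSingletonClass 𝒳] [Fintype 𝒳]
    [MeasurableSpace 𝒴] [MeasurableSingletonClass 𝒴] [Fintype 𝒴]
    [Fintype 𝒞]
    (μ : Measure Ω) [IsProbabilityMeasure μ]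
    (X : Ω → 𝒳) (Y : Ω → 𝒴) (hX : Measurable X) (hY : Measurable Y)
    (k : ℕ) (w : Fin (k + 1) → 𝒳 → 𝒞)
    (hnotCI : ¬ CondIndepFun μ Y (fun ω => w (Fin.last k) (X ω))
        (fun ω => fun i : Fin k => w i.castSucc (X ω))) :
    condMI μ Y X (fun ω => fun i : Fin (k + 1) => w i (X ω)) <
      condMI μ Y X (fun ω => fun i : Fin k => w i.castSucc (X ω)) := by
  classical
  set W : Ω → 𝒞 := fun ω => w (Fin.last k) (X ω) with hWdef
  set Z : Ω → (Fin k → 𝒞) := fun ω => fun i : Fin k => w i.castSucc (X ω) with hZdef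
  set Z1 : Ω → (Fin (k+1) → 𝒞) := fun ω => fun i : Fin (k+1) => w i (X ω) with hZ1def
  -- measurability of basic sets
  have hmeas3 : ∀ (a : 𝒴) (b : 𝒞) (c : Fin k → 𝒞),
      MeasurableSet {ω | Y ω = a ∧ W ω = b ∧ Z ω = c} := by
    intro a b c
    have hset : {ω | Y ω = a ∧ W ω = b ∧ Z ω = c}
        = Y ⁻¹' {a} ∩ X ⁻¹' {x | w (Fin.last k) x = b ∧ (fun i : Fin k => w i.castSucc x) = c} := by
      ext ω; simp [hWdef, hZdef]
    rw [hset]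
    exact (hY (measurableSet_singleton a)).inter (hX (Set.toFinite _).measurableSet)
  have hmeasYZ : ∀ (a : 𝒴) (c : Fin k → 𝒞), MeasurableSet {ω | Y ω = a ∧ Z ω = c} := by
    intro a c
    have hset : {ω | Y ω = a ∧ Z ω = c}
        = Y ⁻¹' {a} ∩ X ⁻¹' {x | (fun i : Fin k => w i.castSucc x) = c} := by
      ext ω; simp [hZdef]
    rw [hset]
    exact (hY (measurableSet_singleton a)).inter (hX (Set.toFinite _).measurableSet)
  -- marginals
  have hmYZ : ∀ (a : 𝒴) (c : Fin k → 𝒞), (μ {ω | Y ω = a ∧ Z ω = c}).toReal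
      = ∑ b, (μ {ω | Y ω = a ∧ W ω = b ∧ Z ω = c}).toReal := by
    intro a c
    refine toReal_measure_iUnion μ _ (fun b => {ω | Y ω = a ∧ W ω = b ∧ Z ω = c}) ?_ ?_
      (fun b => hmeas3 a b c)
    · ext ω
      simp only [Set.mem_setOf_eq, Set.mem_iUnion]
      constructor
      · rintro ⟨h1, h2⟩; exact ⟨W ω, h1, rfl, h2⟩
      · rintro ⟨b, h1, -, h2⟩; exact ⟨h1, h2⟩
    · intro b b' hbb'
      refine Set.disjoint_left.mpr ?_
      rintro ω ⟨-, h1, -⟩ ⟨-, h2, -⟩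
      exact hbb' (h1.symm.trans h2)
  have hmWZ : ∀ (b : 𝒞) (c : Fin k → 𝒞), (μ {ω | W ω = b ∧ Z ω = c}).toReal
      = ∑ a, (μ {ω | Y ω = a ∧ W ω = b ∧ Z ω = c}).toReal := by
    intro b c
    refine toReal_measure_iUnion μ _ (fun a => {ω | Y ω = a ∧ W ω = b ∧ Z ω = c}) ?_ ?_
      (fun a => hmeas3 a b c)
    · ext ω
      simp only [Set.mem_setOf_eq, Set.mem_iUnion]
      constructor
      · rintro ⟨h1, h2⟩; exact ⟨Y ω, rfl, h1, h2⟩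
      · rintro ⟨a, -, h1, h2⟩; exact ⟨h1, h2⟩
    · intro a a' haa'
      refine Set.disjoint_left.mpr ?_
      rintro ω ⟨h1, -⟩ ⟨h2, -⟩
      exact haa' (h1.symm.trans h2)
  have hmZ : ∀ (c : Fin k → 𝒞), (μ {ω | Z ω = c}).toReal
      = ∑ a, ∑ b, (μ {ω | Y ω = a ∧ W ω = b ∧ Z ω = c}).toReal := by
    intro c
    have h1 : (μ {ω | Z ω = c}).toReal = ∑ a, (μ {ω | Y ω = a ∧ Z ω = c}).toReal := by
      refine toReal_measure_iUnion μ _ (fun a => {ω | Y ω = a ∧ Z ω = c}) ?_ ?_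
        (fun a => hmeasYZ a c)
      · ext ω
        simp only [Set.mem_setOf_eq, Set.mem_iUnion]
        constructor
        · intro h2; exact ⟨Y ω, rfl, h2⟩
        · rintro ⟨a, -, h2⟩; exact h2
      · intro a a' haa'
        refine Set.disjoint_left.mpr ?_
        rintro ω ⟨h1, -⟩ ⟨h2, -⟩
        exact haa' (h1.symm.trans h2)
    rw [h1]
    exact Finset.sum_congr rfl fun a _ => hmYZ a c
  -- entropy reductions via injective recodings
  have hg1 : Function.Injective
      (fun q : 𝒴 × 𝒳 => (q.1, (q.2, fun i : Fin (k+1) => w i q.2))) := by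
    rintro ⟨a, x⟩ ⟨a', x'⟩ h
    simp only [Prod.mk.injEq] at h
    obtain ⟨rfl, rfl, -⟩ := h
    rfl
  have hg2 : Function.Injective
      (fun q : 𝒴 × 𝒳 => (q.1, (q.2, fun i : Fin k => w i.castSucc q.2))) := by
    rintro ⟨a, x⟩ ⟨a', x'⟩ h
    simp only [Prod.mk.injEq] at h
    obtain ⟨rfl, rfl, -⟩ := h
    rfl
  have hg3 : Function.Injective (fun x : 𝒳 => (x, fun i : Fin (k+1) => w i x)) := by
    rintro x x' h
    simp only [Prod.mk.injEq] at h
    exact h.1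
  have hg4 : Function.Injective (fun x : 𝒳 => (x, fun i : Fin k => w i.castSucc x)) := by
    rintro x x' h
    simp only [Prod.mk.injEq] at h
    exact h.1
  have hg5 : Function.Injective
      (fun f : Fin (k+1) → 𝒞 => (f (Fin.last k), fun i : Fin k => f i.castSucc)) := by
    intro f f' h
    simp only [Prod.mk.injEq] at h
    funext j
    induction j using Fin.lastCases with
    | last => exact h.1
    | cast i => exact congrFun h.2 i
  have hg6 : Function.Injective
      (fun q : 𝒴 × (Fin (k+1) → 𝒞) =>
        (q.1, (q.2 (Fin.last k), fun i : Fin k => q.2 i.castSucc))) := by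
    rintro ⟨a, f⟩ ⟨a', f'⟩ h
    simp only [Prod.mk.injEq] at h
    obtain ⟨rfl, h2, h3⟩ := h
    have : f = f' := hg5 (by simp only [Prod.mk.injEq]; exact ⟨h2, h3⟩)
    rw [this]
  have hE1 : Hent μ (fun ω => (Y ω, (X ω, Z1 ω))) = Hent μ (fun ω => (Y ω, X ω)) :=
    hent_comp_injective μ (fun ω => (Y ω, X ω)) _ hg1
  have hE2 : Hent μ (fun ω => (Y ω, (X ω, Z ω))) = Hent μ (fun ω => (Y ω, X ω)) :=
    hent_comp_injective μ (fun ω => (Y ω, X ω)) _ hg2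
  have hE3 : Hent μ (fun ω => (X ω, Z1 ω)) = Hent μ X :=
    hent_comp_injective μ X _ hg3
  have hE4 : Hent μ (fun ω => (X ω, Z ω)) = Hent μ X :=
    hent_comp_injective μ X _ hg4
  have hE5 : Hent μ (fun ω => (W ω, Z ω)) = Hent μ Z1 :=
    hent_comp_injective μ Z1 _ hg5
  have hE6 : Hent μ (fun ω => (Y ω, (W ω, Z ω))) = Hent μ (fun ω => (Y ω, Z1 ω)) :=
    hent_comp_injective μ (fun ω => (Y ω, Z1 ω)) _ hg6
  -- entropies as sums
  have hH_joint : Hent μ (fun ω => (Y ω, (W ω, Z ω)))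
      = -∑ a, ∑ b, ∑ c, (μ {ω | Y ω = a ∧ W ω = b ∧ Z ω = c}).toReal
          * Real.log (μ {ω | Y ω = a ∧ W ω = b ∧ Z ω = c}).toReal := by
    unfold Hent
    rw [Fintype.sum_prod_type]
    congr 1
    refine Finset.sum_congr rfl fun a _ => ?_
    rw [Fintype.sum_prod_type]
    refine Finset.sum_congr rfl fun b _ => Finset.sum_congr rfl fun c _ => ?_
    have hset : (fun ω => (Y ω, (W ω, Z ω))) ⁻¹' {(a, (b, c))}
        = {ω | Y ω = a ∧ W ω = b ∧ Z ω = c} := by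
      ext ω; simp [Prod.ext_iff]
    rw [hset]
  have hH_YZ : Hent μ (fun ω => (Y ω, Z ω))
      = -∑ a, ∑ c, (μ {ω | Y ω = a ∧ Z ω = c}).toReal
          * Real.log (μ {ω | Y ω = a ∧ Z ω = c}).toReal := by
    unfold Hent
    rw [Fintype.sum_prod_type]
    congr 1
    refine Finset.sum_congr rfl fun a _ => Finset.sum_congr rfl fun c _ => ?_
    have hset : (fun ω => (Y ω, Z ω)) ⁻¹' {(a, c)} = {ω | Y ω = a ∧ Z ω = c} := by
      ext ω; simp [Prod.ext_iff]
    rw [hset]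
  have hH_WZ : Hent μ (fun ω => (W ω, Z ω))
      = -∑ b, ∑ c, (μ {ω | W ω = b ∧ Z ω = c}).toReal
          * Real.log (μ {ω | W ω = b ∧ Z ω = c}).toReal := by
    unfold Hent
    rw [Fintype.sum_prod_type]
    congr 1
    refine Finset.sum_congr rfl fun b _ => Finset.sum_congr rfl fun c _ => ?_
    have hset : (fun ω => (W ω, Z ω)) ⁻¹' {(b, c)} = {ω | W ω = b ∧ Z ω = c} := by
      ext ω; simp [Prod.ext_iff]
    rw [hset]
  have hH_Z : Hent μ Z
      = -∑ c, (μ {ω | Z ω = c}).toReal * Real.log (μ {ω | Z ω = c}).toReal := by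
    unfold Hent
    congr 1
  -- nonnegativity and the strict inequality point
  have hp : ∀ (a : 𝒴) (b : 𝒞) (c : Fin k → 𝒞),
      (0:ℝ) ≤ (μ {ω | Y ω = a ∧ W ω = b ∧ Z ω = c}).toReal :=
    fun a b c => ENNReal.toReal_nonneg
  unfold CondIndepFun at hnotCI
  push_neg at hnotCI
  obtain ⟨a₀, b₀, c₀, h₀⟩ := hnotCI
  rw [hmZ c₀, hmYZ a₀ c₀, hmWZ b₀ c₀] at h₀
  have main := core_lt (fun a b c => (μ {ω | Y ω = a ∧ W ω = b ∧ Z ω = c}).toReal) hp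
    ⟨a₀, b₀, c₀, h₀⟩
  beta_reduce at main
  -- assemble
  simp only [condMI, condHent]
  rw [← hE5, ← hE6, hE1, hE2, hE3, hE4, hH_joint, hH_YZ, hH_WZ, hH_Z]
  have hmYZ' : ∀ a c, (μ {ω | Y ω = a ∧ Z ω = c}).toReal
      = ∑ b, (μ {ω | Y ω = a ∧ W ω = b ∧ Z ω = c}).toReal := hmYZ
  -- rewrite marginals inside the sums
  have eYZ : ∑ a, ∑ c, (μ {ω | Y ω = a ∧ Z ω = c}).toReal
        * Real.log (μ {ω | Y ω = a ∧ Z ω = c}).toReal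
      = ∑ a, ∑ c, (∑ b, (μ {ω | Y ω = a ∧ W ω = b ∧ Z ω = c}).toReal)
        * Real.log (∑ b, (μ {ω | Y ω = a ∧ W ω = b ∧ Z ω = c}).toReal) := by
    refine Finset.sum_congr rfl fun a _ => Finset.sum_congr rfl fun c _ => ?_
    rw [hmYZ a c]
  have eWZ : ∑ b, ∑ c, (μ {ω | W ω = b ∧ Z ω = c}).toReal
        * Real.log (μ {ω | W ω = b ∧ Z ω = c}).toReal
      = ∑ b, ∑ c, (∑ a, (μ {ω | Y ω = a ∧ W ω = b ∧ Z ω = c}).toReal)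
        * Real.log (∑ a, (μ {ω | Y ω = a ∧ W ω = b ∧ Z ω = c}).toReal) := by
    refine Finset.sum_congr rfl fun b _ => Finset.sum_congr rfl fun c _ => ?_
    rw [hmWZ b c]
  have eZ : ∑ c, (μ {ω | Z ω = c}).toReal * Real.log (μ {ω | Z ω = c}).toReal
      = ∑ c, (∑ a, ∑ b, (μ {ω | Y ω = a ∧ W ω = b ∧ Z ω = c}).toReal)
        * Real.log (∑ a, ∑ b, (μ {ω | Y ω = a ∧ W ω = b ∧ Z ω = c}).toReal) := by
    refine Finset.sum_congr rfl fun c _ => ?_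
    rw [hmZ c]
  rw [eYZ, eWZ, eZ]
  linarith [main]
end

section
/- Let X and Y be random variables on a probability space taking values in finite sets 𝒳 and 𝒴, and let h : 𝒳 → 𝒞 be a function into a finite set. If Y is NOT conditionally independent of X given h(X), then there exists a function ŵ : 𝒳 → {0, 1} such that H(Y | (h(X), ŵ(X))) < H(Y | h(X)); that is, some binary factor of X strictly lowers the conditional entropy of Y beyond conditioning on h(X) alone. -/
open MeasureTheory

lemma sum_meas {Ω ι : Type*} [MeasurableSpace Ω] [Fintype ι] (μ : Measure Ω)
    [IsFiniteMeasure μ] (s : ι → Set Ω) (T : Set Ω) (hm : ∀ i, MeasurableSet (s i))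
    (hd : Pairwise (Function.onFun Disjoint s)) (hU : (⋃ i, s i) = T) :
    ∑ i, (μ (s i)).toReal = (μ T).toReal := by
  rw [← hU, measure_iUnion hd hm, ENNReal.tsum_toReal_eq (fun i => measure_ne_top μ _),
    tsum_fintype]


lemma gibbs_term {p q : ℝ} (hp : 0 ≤ p) (hq : 0 ≤ q) (hac : q = 0 → p = 0) :
    p * Real.log q - p * Real.log p ≤ q - p := by
  rcases eq_or_lt_of_le hp with h0 | hpos
  · simp [← h0]; exact hq
  · have hq0 : 0 < q := lt_of_le_of_ne hq (fun hh => absurd (hac hh.symm) (ne_of_gt hpos))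
    have h1 := Real.log_le_sub_one_of_pos (div_pos hq0 hpos)
    rw [Real.log_div hq0.ne' hpos.ne'] at h1
    have h2 : p * (q / p - 1) = q - p := by field_simp
    nlinarith [mul_le_mul_of_nonneg_left h1 hpos.le]

lemma gibbs_term_strict {p q : ℝ} (hp : 0 ≤ p) (hq : 0 ≤ q) (hac : q = 0 → p = 0)
    (hne : p ≠ q) :
    p * Real.log q - p * Real.log p < q - p := by
  rcases eq_or_lt_of_le hp with h0 | hpos
  · have hq0 : 0 < q := lt_of_le_of_ne hq (fun hh => hne (h0.symm.trans hh))
    simp [← h0]; exact hq0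
  · have hq0 : 0 < q := lt_of_le_of_ne hq (fun hh => absurd (hac hh.symm) (ne_of_gt hpos))
    have hne1 : q / p ≠ 1 := by
      intro hh
      exact hne ((div_eq_one_iff_eq hpos.ne').mp hh).symm
    have h1 := Real.log_lt_sub_one_of_pos (div_pos hq0 hpos) hne1
    rw [Real.log_div hq0.ne' hpos.ne'] at h1
    have h2 : p * (q / p - 1) = q - p := by field_simp
    nlinarith [mul_lt_mul_of_pos_left h1 hpos]

lemma gibbs {ι : Type*} [Fintype ι] (p q : ι → ℝ) (hp : ∀ i, 0 ≤ p i) (hq : ∀ i, 0 ≤ q i)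
    (hsum : ∑ i, q i ≤ ∑ i, p i) (hac : ∀ i, q i = 0 → p i = 0)
    (i0 : ι) (hne : p i0 ≠ q i0) :
    ∑ i, p i * Real.log (q i) < ∑ i, p i * Real.log (p i) := by
  have key : ∑ i, (p i * Real.log (q i) - p i * Real.log (p i)) < ∑ i, (q i - p i) := by
    apply Finset.sum_lt_sum
    · intro i _; exact gibbs_term (hp i) (hq i) (hac i)
    · exact ⟨i0, Finset.mem_univ _, gibbs_term_strict (hp i0) (hq i0) (hac i0) hne⟩
  rw [Finset.sum_sub_distrib] at key
  rw [Finset.sum_sub_distrib] at key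
  linarith

lemma key {Ω α β γ : Type*} [MeasurableSpace Ω] [Fintype α] [Fintype β] [Fintype γ]
    (μ : Measure Ω) [IsProbabilityMeasure μ] (Y : Ω → α) (W : Ω → β) (Z : Ω → γ)
    (hm : ∀ a w c, MeasurableSet {ω | Y ω = a ∧ W ω = w ∧ Z ω = c})
    (a0 : α) (w0 : β) (c0 : γ)
    (hne0 : ¬ ((μ {ω | Y ω = a0 ∧ W ω = w0 ∧ Z ω = c0}).toReal * (μ {ω | Z ω = c0}).toReal =
      (μ {ω | Y ω = a0 ∧ Z ω = c0}).toReal * (μ {ω | W ω = w0 ∧ Z ω = c0}).toReal)) :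
    (Hent μ (fun ω => (Y ω, (Z ω, W ω))) - Hent μ (fun ω => (Z ω, W ω))) <
      (Hent μ (fun ω => (Y ω, Z ω)) - Hent μ Z) := by
  classical
  set p : α → β → γ → ℝ := fun a w c => (μ {ω | Y ω = a ∧ W ω = w ∧ Z ω = c}).toReal with hp_def
  set p2 : α → γ → ℝ := fun a c => (μ {ω | Y ω = a ∧ Z ω = c}).toReal with hp2_def
  set p3 : β → γ → ℝ := fun w c => (μ {ω | W ω = w ∧ Z ω = c}).toReal with hp3_def
  set p4 : γ → ℝ := fun c => (μ {ω | Z ω = c}).toReal with hp4_def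
  -- marginals
  have hmarg_w : ∀ a c, ∑ w, p a w c = p2 a c := by
    intro a c
    exact sum_meas μ _ _ (fun w => hm a w c)
      (fun w1 w2 hne => Set.disjoint_left.mpr (by rintro ω ⟨_, h1, _⟩ ⟨_, h2, _⟩; exact hne (h1 ▸ h2)))
      (by ext ω; simp [and_comm, and_left_comm])
  have hmarg_a : ∀ w c, ∑ a, p a w c = p3 w c := by
    intro w c
    exact sum_meas μ _ _ (fun a => hm a w c)
      (fun a1 a2 hne => Set.disjoint_left.mpr (by rintro ω ⟨h1, _⟩ ⟨h2, _⟩; exact hne (h1 ▸ h2)))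
      (by ext ω; simp)
  have hm2 : ∀ a c, MeasurableSet {ω | Y ω = a ∧ Z ω = c} := by
    intro a c
    have : {ω | Y ω = a ∧ Z ω = c} = ⋃ w, {ω | Y ω = a ∧ W ω = w ∧ Z ω = c} := by
      ext ω; simp
    rw [this]; exact MeasurableSet.iUnion (fun w => hm a w c)
  have hm3 : ∀ w c, MeasurableSet {ω | W ω = w ∧ Z ω = c} := by
    intro w c
    have : {ω | W ω = w ∧ Z ω = c} = ⋃ a, {ω | Y ω = a ∧ W ω = w ∧ Z ω = c} := by
      ext ω; simp
    rw [this]; exact MeasurableSet.iUnion (fun a => hm a w c)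
  have hmarg_p2 : ∀ c, ∑ a, p2 a c = p4 c := by
    intro c
    exact sum_meas μ _ _ (fun a => hm2 a c)
      (fun a1 a2 hne => Set.disjoint_left.mpr (by rintro ω ⟨h1, _⟩ ⟨h2, _⟩; exact hne (h1 ▸ h2)))
      (by ext ω; simp)
  have hmarg_p3 : ∀ c, ∑ w, p3 w c = p4 c := by
    intro c
    exact sum_meas μ _ _ (fun w => hm3 w c)
      (fun w1 w2 hne => Set.disjoint_left.mpr (by rintro ω ⟨h1, _⟩ ⟨h2, _⟩; exact hne (h1 ▸ h2)))
      (by ext ω; simp)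
  have hm4 : ∀ c, MeasurableSet {ω | Z ω = c} := by
    intro c
    have : {ω | Z ω = c} = ⋃ a, {ω | Y ω = a ∧ Z ω = c} := by ext ω; simp
    rw [this]; exact MeasurableSet.iUnion (fun a => hm2 a c)
  have hsum_p4 : ∑ c, p4 c = 1 := by
    have := sum_meas μ (fun c => {ω | Z ω = c}) Set.univ (fun c => hm4 c)
      (fun c1 c2 hne => Set.disjoint_left.mpr (by intro ω h1 h2; simp only [Set.mem_setOf_eq] at h1 h2; exact hne (h1 ▸ h2)))
      (by ext ω; simp)
    simpa using this
  -- nonneg and monotonicity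
  have hp0 : ∀ a w c, 0 ≤ p a w c := fun a w c => ENNReal.toReal_nonneg
  have hp20 : ∀ a c, 0 ≤ p2 a c := fun a c => ENNReal.toReal_nonneg
  have hp30 : ∀ w c, 0 ≤ p3 w c := fun w c => ENNReal.toReal_nonneg
  have hp40 : ∀ c, 0 ≤ p4 c := fun c => ENNReal.toReal_nonneg
  have hple2 : ∀ a w c, p a w c ≤ p2 a c := fun a w c =>
    ENNReal.toReal_mono (measure_ne_top μ _) (measure_mono fun ω hω => ⟨hω.1, hω.2.2⟩)
  have hple3 : ∀ a w c, p a w c ≤ p3 w c := fun a w c =>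
    ENNReal.toReal_mono (measure_ne_top μ _) (measure_mono fun ω hω => ⟨hω.2.1, hω.2.2⟩)
  have h2le4 : ∀ a c, p2 a c ≤ p4 c := fun a c =>
    ENNReal.toReal_mono (measure_ne_top μ _) (measure_mono fun ω hω => hω.2)
  have h3le4 : ∀ w c, p3 w c ≤ p4 c := fun w c =>
    ENNReal.toReal_mono (measure_ne_top μ _) (measure_mono fun ω hω => hω.2)
  -- entropy rewrites
  have hsetYZW : ∀ (a : α) (c : γ) (w : β),
      (fun ω => (Y ω, (Z ω, W ω))) ⁻¹' {(a, (c, w))} = {ω | Y ω = a ∧ W ω = w ∧ Z ω = c} := by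
    intro a c w; ext ω; simp [Prod.ext_iff]; tauto
  have hsetZW : ∀ (c : γ) (w : β),
      (fun ω => (Z ω, W ω)) ⁻¹' {(c, w)} = {ω | W ω = w ∧ Z ω = c} := by
    intro c w; ext ω; simp [Prod.ext_iff]; tauto
  have hsetYZ : ∀ (a : α) (c : γ),
      (fun ω => (Y ω, Z ω)) ⁻¹' {(a, c)} = {ω | Y ω = a ∧ Z ω = c} := by
    intro a c; ext ω; simp [Prod.ext_iff]
  have hsetZ : ∀ (c : γ), Z ⁻¹' {c} = {ω | Z ω = c} := by
    intro c; ext ω; simp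
  have hH1 : Hent μ (fun ω => (Y ω, (Z ω, W ω)))
      = -∑ a, ∑ w, ∑ c, p a w c * Real.log (p a w c) := by
    simp only [Hent, Fintype.sum_prod_type, hsetYZW, hp_def]
    congr 1
    exact Finset.sum_congr rfl fun a _ => Finset.sum_comm
  have hH2 : Hent μ (fun ω => (Z ω, W ω))
      = -∑ w, ∑ c, p3 w c * Real.log (p3 w c) := by
    simp only [Hent, Fintype.sum_prod_type, hsetZW, hp3_def]
    congr 1
    exact Finset.sum_comm
  have hH3 : Hent μ (fun ω => (Y ω, Z ω))
      = -∑ a, ∑ c, p2 a c * Real.log (p2 a c) := by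
    simp only [Hent, Fintype.sum_prod_type, hsetYZ, hp2_def]
  have hH4 : Hent μ Z = -∑ c, p4 c * Real.log (p4 c) := by
    simp only [Hent, hsetZ, hp4_def]
  rw [hH1, hH2, hH3, hH4]
  -- define q
  set q : α → β → γ → ℝ := fun a w c => p2 a c * p3 w c / p4 c with hq_def
  have hq0 : ∀ a w c, 0 ≤ q a w c := fun a w c =>
    div_nonneg (mul_nonneg (hp20 a c) (hp30 w c)) (hp40 c)
  have hac : ∀ a w c, q a w c = 0 → p a w c = 0 := by
    intro a w c hq
    rcases div_eq_zero_iff.mp hq with hq | hq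
    · rcases mul_eq_zero.mp hq with hq | hq
      · exact le_antisymm (hq ▸ hple2 a w c) (hp0 a w c)
      · exact le_antisymm (hq ▸ hple3 a w c) (hp0 a w c)
    · exact le_antisymm (hq ▸ le_trans (hple2 a w c) (h2le4 a c)) (hp0 a w c)
  -- log identity for q when p > 0
  have hlogq : ∀ a w c, p a w c * Real.log (q a w c)
      = p a w c * (Real.log (p2 a c) + Real.log (p3 w c) - Real.log (p4 c)) := by
    intro a w c
    rcases eq_or_lt_of_le (hp0 a w c) with h0 | hpos
    · rw [← h0]; ring
    · have h2 : 0 < p2 a c := lt_of_lt_of_le hpos (hple2 a w c)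
      have h3 : 0 < p3 w c := lt_of_lt_of_le hpos (hple3 a w c)
      have h4 : 0 < p4 c := lt_of_lt_of_le h2 (h2le4 a c)
      rw [hq_def]
      simp only
      rw [Real.log_div (by positivity) h4.ne', Real.log_mul h2.ne' h3.ne']
  -- sum of p log q equals the marginal entropies combination
  have hsplit : ∑ a, ∑ w, ∑ c, p a w c * Real.log (q a w c)
      = (∑ a, ∑ c, p2 a c * Real.log (p2 a c))
        + (∑ w, ∑ c, p3 w c * Real.log (p3 w c))
        - (∑ c, p4 c * Real.log (p4 c)) := by
    have e1 : ∑ a, ∑ w, ∑ c, p a w c * Real.log (p2 a c)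
        = ∑ a, ∑ c, p2 a c * Real.log (p2 a c) := by
      refine Finset.sum_congr rfl fun a _ => ?_
      rw [Finset.sum_comm]
      refine Finset.sum_congr rfl fun c _ => ?_
      rw [← Finset.sum_mul, hmarg_w a c]
    have e2 : ∑ a, ∑ w, ∑ c, p a w c * Real.log (p3 w c)
        = ∑ w, ∑ c, p3 w c * Real.log (p3 w c) := by
      rw [Finset.sum_comm]
      refine Finset.sum_congr rfl fun w _ => ?_
      rw [Finset.sum_comm]
      refine Finset.sum_congr rfl fun c _ => ?_
      rw [← Finset.sum_mul, hmarg_a w c]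
    have e3 : ∑ a, ∑ w, ∑ c, p a w c * Real.log (p4 c)
        = ∑ c, p4 c * Real.log (p4 c) := by
      calc ∑ a, ∑ w, ∑ c, p a w c * Real.log (p4 c)
          = ∑ a, ∑ c, ∑ w, p a w c * Real.log (p4 c) :=
            Finset.sum_congr rfl fun a _ => Finset.sum_comm
        _ = ∑ c, ∑ a, ∑ w, p a w c * Real.log (p4 c) := Finset.sum_comm
        _ = ∑ c, p4 c * Real.log (p4 c) := by
            refine Finset.sum_congr rfl fun c _ => ?_
            have h1 : ∀ a, ∑ w, p a w c * Real.log (p4 c) = p2 a c * Real.log (p4 c) :=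
              fun a => by rw [← Finset.sum_mul, hmarg_w a c]
            rw [Finset.sum_congr rfl fun a _ => h1 a, ← Finset.sum_mul, hmarg_p2 c]
    calc ∑ a, ∑ w, ∑ c, p a w c * Real.log (q a w c)
        = ∑ a, ∑ w, ∑ c, (p a w c * Real.log (p2 a c) + p a w c * Real.log (p3 w c)
            - p a w c * Real.log (p4 c)) := by
          refine Finset.sum_congr rfl fun a _ => Finset.sum_congr rfl fun w _ =>
            Finset.sum_congr rfl fun c _ => ?_
          rw [hlogq a w c]; ring
      _ = (∑ a, ∑ w, ∑ c, p a w c * Real.log (p2 a c))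
            + (∑ a, ∑ w, ∑ c, p a w c * Real.log (p3 w c))
            - (∑ a, ∑ w, ∑ c, p a w c * Real.log (p4 c)) := by
          simp [Finset.sum_add_distrib, Finset.sum_sub_distrib]
      _ = _ := by rw [e1, e2, e3]
  -- total sums
  have hsum_p : ∑ a, ∑ w, ∑ c, p a w c = 1 := by
    calc ∑ a, ∑ w, ∑ c, p a w c
        = ∑ a, ∑ c, ∑ w, p a w c := Finset.sum_congr rfl fun a _ => Finset.sum_comm
      _ = ∑ a, ∑ c, p2 a c :=
          Finset.sum_congr rfl fun a _ => Finset.sum_congr rfl fun c _ => hmarg_w a c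
      _ = ∑ c, ∑ a, p2 a c := Finset.sum_comm
      _ = ∑ c, p4 c := Finset.sum_congr rfl fun c _ => hmarg_p2 c
      _ = 1 := hsum_p4
  have hsum_q : ∑ a, ∑ w, ∑ c, q a w c ≤ 1 := by
    have hc : ∀ c, ∑ a, ∑ w, q a w c ≤ p4 c := by
      intro c
      rcases eq_or_lt_of_le (hp40 c) with h0 | h4
      · have hz : ∀ a w, q a w c = 0 := by
          intro a w
          have h2z : p2 a c = 0 := le_antisymm (h0 ▸ h2le4 a c) (hp20 a c)
          rw [hq_def]; simp only; rw [h2z]; simp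
        simp only [hz]; simp; exact hp40 c
      · have heq : ∑ a, ∑ w, q a w c = p4 c := by
          have h1 : ∀ a, ∑ w, q a w c = p2 a c := by
            intro a
            rw [hq_def]; simp only
            rw [← Finset.sum_div, ← Finset.mul_sum, hmarg_p3 c, mul_div_assoc,
              div_self h4.ne', mul_one]
          rw [Finset.sum_congr rfl fun a _ => h1 a, hmarg_p2 c]
        exact le_of_eq heq
    calc ∑ a, ∑ w, ∑ c, q a w c
        = ∑ a, ∑ c, ∑ w, q a w c := Finset.sum_congr rfl fun a _ => Finset.sum_comm
      _ = ∑ c, ∑ a, ∑ w, q a w c := Finset.sum_comm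
      _ ≤ ∑ c, p4 c := Finset.sum_le_sum fun c _ => hc c
      _ = 1 := hsum_p4
  -- witness
  have hne0' : ¬(p a0 w0 c0 * p4 c0 = p2 a0 c0 * p3 w0 c0) := by
    simpa only [hp_def, hp2_def, hp3_def, hp4_def] using hne0
  have hp4c0 : 0 < p4 c0 := by
    rcases eq_or_lt_of_le (hp40 c0) with h0 | h4
    · exfalso
      apply hne0'
      have e2' : p2 a0 c0 = 0 := le_antisymm (h0 ▸ h2le4 a0 c0) (hp20 a0 c0)
      have e1' : p a0 w0 c0 = 0 :=
        le_antisymm (le_trans (hple2 a0 w0 c0) (le_of_eq e2')) (hp0 a0 w0 c0)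
      rw [e1', e2']; ring
    · exact h4
  have hwit : p a0 w0 c0 ≠ q a0 w0 c0 := by
    intro heq
    apply hne0'
    rw [hq_def] at heq
    simp only at heq
    rw [heq]
    field_simp
  -- apply Gibbs
  have gb := gibbs (ι := α × β × γ) (fun i => p i.1 i.2.1 i.2.2) (fun i => q i.1 i.2.1 i.2.2)
    (fun i => hp0 _ _ _) (fun i => hq0 _ _ _)
    (by
      simp only [Fintype.sum_prod_type]
      rw [hsum_p]
      exact hsum_q)
    (fun i => hac i.1 i.2.1 i.2.2) (a0, w0, c0) hwit
  simp only [Fintype.sum_prod_type] at gb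
  rw [hsplit] at gb
  linarith

/-- If `Y` is not conditionally independent of `X` given `h(X)`,
then there exists a binary factor `w' : 𝒳 → {0, 1}` such that
`H(Y | (h(X), w'(X))) < H(Y | h(X))`. -/
theorem stmt_8 {Ω 𝒳 𝒴 𝒞 : Type*} [MeasurableSpace Ω]
    [MeasurableSpace 𝒳] [MeasurableSingletonClass 𝒳] [Fintype 𝒳]
    [MeasurableSpace 𝒴] [MeasurableSingletonClass 𝒴] [Fintype 𝒴]
    [Fintype 𝒞]
    (μ : Measure Ω) [IsProbabilityMeasure μ]
    (X : Ω → 𝒳) (Y : Ω → 𝒴) (hX : Measurable X) (hY : Measurable Y)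
    (h : 𝒳 → 𝒞)
    (hnotCI : ¬ CondIndepFun μ Y X (fun ω => h (X ω))) :
    ∃ w' : 𝒳 → Fin 2,
      condHent μ Y (fun ω => (h (X ω), w' (X ω))) < condHent μ Y (fun ω => h (X ω)) := by
  classical
  simp only [CondIndepFun, not_forall] at hnotCI
  obtain ⟨a0, b, c0, hne0⟩ := hnotCI
  refine ⟨fun x => if x = b then (1 : Fin 2) else 0, ?_⟩
  have hm : ∀ (a : 𝒴) (w : Fin 2) (c : 𝒞),
      MeasurableSet {ω | Y ω = a ∧ (if X ω = b then (1 : Fin 2) else 0) = w ∧ h (X ω) = c} := by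
    intro a w c
    have hs : {ω | Y ω = a ∧ (if X ω = b then (1 : Fin 2) else 0) = w ∧ h (X ω) = c}
        = Y ⁻¹' {a} ∩ X ⁻¹' {x | (if x = b then (1 : Fin 2) else 0) = w ∧ h x = c} := by
      ext ω; simp [Set.mem_setOf_eq]
    rw [hs]
    exact (hY (measurableSet_singleton a)).inter
      (hX (Set.Finite.measurableSet (Set.toFinite _)))
  have hs1 : {ω | Y ω = a0 ∧ (if X ω = b then (1 : Fin 2) else 0) = 1 ∧ h (X ω) = c0}
      = {ω | Y ω = a0 ∧ X ω = b ∧ h (X ω) = c0} := by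
    ext ω
    simp only [Set.mem_setOf_eq]
    constructor
    · rintro ⟨h1, h2, h3⟩
      refine ⟨h1, ?_, h3⟩
      by_contra hb
      simp [hb] at h2
    · rintro ⟨h1, h2, h3⟩
      exact ⟨h1, by simp [h2], h3⟩
  have hs2 : {ω | (if X ω = b then (1 : Fin 2) else 0) = 1 ∧ h (X ω) = c0}
      = {ω | X ω = b ∧ h (X ω) = c0} := by
    ext ω
    simp only [Set.mem_setOf_eq]
    constructor
    · rintro ⟨h2, h3⟩
      refine ⟨?_, h3⟩
      by_contra hb
      simp [hb] at h2
    · rintro ⟨h2, h3⟩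
      exact ⟨by simp [h2], h3⟩
  have hne0' : ¬ ((μ {ω | Y ω = a0 ∧ (if X ω = b then (1 : Fin 2) else 0) = 1 ∧ h (X ω) = c0}).toReal
        * (μ {ω | h (X ω) = c0}).toReal
      = (μ {ω | Y ω = a0 ∧ h (X ω) = c0}).toReal
        * (μ {ω | (if X ω = b then (1 : Fin 2) else 0) = 1 ∧ h (X ω) = c0}).toReal) := by
    rw [hs1, hs2]
    exact hne0
  exact key μ Y (fun ω => if X ω = b then (1 : Fin 2) else 0) (fun ω => h (X ω))
    hm a0 1 c0 hne0'
end

section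
/- Let δ ∈ (0, 1/2), ε ∈ (0, 1/2), p ∈ (0, 1), C ∈ (0, 1), let z_δ < 0 satisfy Φ(z_δ) = δ, and let t > 0 be a real number satisfying √t > (|z_δ|·√(1 − p) / (2·√p)) · (1 + √(1 + 4·log ε / (z_δ²·(1 − p)·log(1 − C)))). If N is a random variable distributed according to the Gaussian distribution with mean t·p and variance t·p·(1 − p), then P((1 − C)^N < ε) ≥ 1 − δ, where (1 − C)^N denotes the real power. -/
open MeasureTheory ProbabilityTheory

set_option maxHeartbeats 1000000 in
/-- Gaussian-approximation form of Proposition 2.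
Let `δ ∈ (0,1/2)`, `ε ∈ (0,1/2)`, `p ∈ (0,1)`, `C ∈ (0,1)`, let `z_δ < 0` satisfy
`Φ(z_δ) = δ`, and let `t > 0` satisfy
`√t > (|z_δ|·√(1−p)/(2√p))·(1 + √(1 + 4·log ε/(z_δ²·(1−p)·log(1−C))))`.
If `N` is distributed according to the Gaussian with mean `t·p` and variance
`t·p·(1−p)`, then `P((1 − C)^N < ε) ≥ 1 − δ`. -/
theorem stmt_12 {Ω : Type*} [MeasurableSpace Ω] (μ : Measure Ω) [IsProbabilityMeasure μ]
    (δ ε p C t zδ : ℝ)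
    (hδ : δ ∈ Set.Ioo (0 : ℝ) (1 / 2)) (hε : ε ∈ Set.Ioo (0 : ℝ) (1 / 2))
    (hp : p ∈ Set.Ioo (0 : ℝ) 1) (hC : C ∈ Set.Ioo (0 : ℝ) 1)
    (hzδ : zδ < 0) (hΦ : cdf (gaussianReal 0 1) zδ = δ) (ht : 0 < t)
    (hsqrt : Real.sqrt t > (|zδ| * Real.sqrt (1 - p) / (2 * Real.sqrt p)) *
      (1 + Real.sqrt (1 + 4 * Real.log ε / (zδ ^ 2 * (1 - p) * Real.log (1 - C)))))
    (N : Ω → ℝ) (hN : Measurable N)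
    (hmap : μ.map N = gaussianReal (t * p) (Real.toNNReal (t * p * (1 - p)))) :
    (μ {ω | (1 - C) ^ (N ω) < ε}).toReal ≥ 1 - δ := by
  obtain ⟨hδ0, hδ2⟩ := hδ
  obtain ⟨hε0, hε2⟩ := hε
  obtain ⟨hp0, hp1⟩ := hp
  obtain ⟨hC0, hC1⟩ := hC
  have h1C0 : (0:ℝ) < 1 - C := by linarith only [hC1]
  have hL : Real.log (1 - C) < 0 := Real.log_neg h1C0 (by linarith only [hC0])
  have hlε : Real.log ε < 0 := Real.log_neg hε0 (by linarith only [hε2])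
  set L := Real.log (1 - C) with hLdef
  set a := Real.log ε / L with hadef
  have ha0 : 0 < a := div_pos_of_neg_of_neg hlε hL
  -- event rewriting
  have hev : {ω | (1 - C) ^ (N ω) < ε} = N ⁻¹' Set.Ioi a := by
    ext ω
    simp only [Set.mem_setOf_eq, Set.mem_preimage, Set.mem_Ioi]
    rw [← Real.log_lt_log_iff (Real.rpow_pos_of_pos h1C0 _) hε0, Real.log_rpow h1C0,
      hadef, div_lt_iff_of_neg hL]
  have hv0 : 0 < t * p * (1 - p) := mul_pos (mul_pos ht hp0) (by linarith only [hp1])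
  set v : NNReal := Real.toNNReal (t * p * (1 - p)) with hvdef
  have hvco : (v : ℝ) = t * p * (1 - p) := Real.coe_toNNReal _ hv0.le
  have hvne : v ≠ 0 := (Real.toNNReal_pos.mpr hv0).ne'
  set σ := Real.sqrt (t * p * (1 - p)) with hσdef
  have hσ0 : 0 < σ := Real.sqrt_pos.2 hv0
  have hσsq : σ ^ 2 = t * p * (1 - p) := Real.sq_sqrt hv0.le
  -- standardization
  have hstd : (gaussianReal (t * p) v).map (fun x => σ⁻¹ * (x + -(t * p))) = gaussianReal 0 1 := by
    have h1 : (gaussianReal (t * p) v).map (fun x => x + -(t * p)) = gaussianReal 0 v := by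
      rw [gaussianReal_map_add_const, add_neg_cancel]
    have h2 : (gaussianReal 0 v).map (fun x => σ⁻¹ * x) = gaussianReal 0 1 := by
      rw [gaussianReal_map_const_mul, mul_zero]
      congr 1
      rw [← NNReal.coe_inj]
      push_cast
      rw [hvco, inv_pow, hσsq]
      field_simp
    rw [show (fun x => σ⁻¹ * (x + -(t * p))) = (fun x => σ⁻¹ * x) ∘ (fun x => x + -(t * p)) from rfl,
      ← Measure.map_map (measurable_const_mul σ⁻¹) (measurable_add_const (-(t * p))), h1, h2]
  -- key inequality : (a - t*p)/σ ≤ zδ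
  set c := (a - t * p) / σ with hcdef
  clear_value L a v σ c
  have hkey : c ≤ zδ := by
    set s := Real.sqrt t with hsdef
    set sp := Real.sqrt p with hspdef
    set sq := Real.sqrt (1 - p) with hsqdef
    have hs0 : 0 < s := Real.sqrt_pos.2 ht
    have hsp0 : 0 < sp := Real.sqrt_pos.2 hp0
    have hsq0 : 0 < sq := Real.sqrt_pos.2 (by linarith only [hp1])
    have hs2 : s ^ 2 = t := Real.sq_sqrt ht.le
    have hsp2 : sp ^ 2 = p := Real.sq_sqrt hp0.le
    have hsq2 : sq ^ 2 = 1 - p := Real.sq_sqrt (by linarith only [hp1])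
    clear_value s sp sq
    have hz2 : (0:ℝ) < zδ ^ 2 := by rw [pow_two]; exact mul_pos_of_neg_of_neg hzδ hzδ
    have hzabs : |zδ| = -zδ := abs_of_neg hzδ
    have harg : 4 * Real.log ε / (zδ ^ 2 * (1 - p) * L) = 4 * a / (zδ ^ 2 * (1 - p)) := by
      rw [hadef]
      field_simp
    set D := Real.sqrt (1 + 4 * Real.log ε / (zδ ^ 2 * (1 - p) * L)) with hDdef
    clear_value D
    have hapos : 0 < 4 * a / (zδ ^ 2 * (1 - p)) :=
      div_pos (by linarith only [ha0]) (mul_pos hz2 (by linarith only [hp1]))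
    have hargpos : 0 ≤ 1 + 4 * Real.log ε / (zδ ^ 2 * (1 - p) * L) := by
      rw [harg]; linarith only [hapos]
    have hD2 : D ^ 2 = 1 + 4 * a / (zδ ^ 2 * (1 - p)) := by
      rw [hDdef, Real.sq_sqrt hargpos, harg]
    have hD1 : 1 ≤ D := by
      rw [hDdef]
      nth_rewrite 1 [show (1:ℝ) = Real.sqrt 1 by simp]
      exact Real.sqrt_le_sqrt (by rw [harg]; linarith only [hapos])
    have hne : zδ ^ 2 * (1 - p) ≠ 0 := ne_of_gt (mul_pos hz2 (by linarith only [hp1]))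
    have hD2' : zδ ^ 2 * (1 - p) * D ^ 2 = zδ ^ 2 * (1 - p) + 4 * a := by
      rw [hD2, mul_add, mul_one, mul_div_cancel₀ _ hne]
    have hσeq : σ = s * sp * sq := by
      rw [hσdef, hsdef, hspdef, hsqdef, ← Real.sqrt_mul ht.le, ← Real.sqrt_mul (by positivity)]
    have hkey0 : |zδ| * sq * (1 + D) < 2 * sp * s := by
      rw [gt_iff_lt, div_mul_eq_mul_div, div_lt_iff₀ (by linarith only [hsp0])] at hsqrt
      have hcomm : s * (2 * sp) = 2 * sp * s := by ring
      linarith only [hsqrt, hcomm]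
    have hprod : 0 < (2 * sp * s - |zδ| * sq * (1 + D)) * (2 * sp * s + |zδ| * sq * (D - 1)) := by
      apply mul_pos (by linarith only [hkey0])
      have h1 : 0 < 2 * sp * s := by positivity
      have h2 : 0 ≤ |zδ| * sq * (D - 1) :=
        mul_nonneg (mul_nonneg (abs_nonneg _) hsq0.le) (by linarith only [hD1])
      linarith only [h1, h2]
    have habs2 : |zδ| ^ 2 = zδ ^ 2 := sq_abs zδ
    have e1 : |zδ| ^ 2 * sq ^ 2 * (D ^ 2 - 1) = 4 * a := by
      rw [habs2, hsq2]; linear_combination hD2'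
    have hexp : (2 * sp * s - |zδ| * sq * (1 + D)) * (2 * sp * s + |zδ| * sq * (D - 1))
        = 4 * sp ^ 2 * s ^ 2 - 4 * (sp * s * (|zδ| * sq)) - 4 * a := by
      linear_combination -e1
    have hineq : a ≤ t * p - |zδ| * σ := by
      rw [hσeq, ← hs2, ← hsp2]
      have h := hprod
      rw [hexp] at h
      linarith only [h]
    rw [hcdef, div_le_iff₀ hσ0]
    have : zδ * σ = -(|zδ| * σ) := by rw [hzabs]; ring
    linarith only [hineq, this]
  -- measure computation
  have hgmap : gaussianReal (t * p) v (Set.Ioi a) = gaussianReal 0 1 (Set.Ioi c) := by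
    rw [← hstd, Measure.map_apply ((measurable_add_const (-(t * p))).const_mul σ⁻¹) measurableSet_Ioi]
    congr 1
    ext x
    simp only [Set.mem_preimage, Set.mem_Ioi]
    rw [hcdef, inv_mul_eq_div, div_lt_div_iff_of_pos_right hσ0]
    constructor <;> intro h <;> linarith only [h]
  have hIoi : gaussianReal 0 1 (Set.Ioi c) = 1 - gaussianReal 0 1 (Set.Iic c) := by
    rw [← Set.compl_Iic, measure_compl measurableSet_Iic (measure_ne_top _ _), measure_univ]
  have hcdfc : cdf (gaussianReal 0 1) c ≤ δ := by
    rw [← hΦ]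
    exact ProbabilityTheory.monotone_cdf (μ := gaussianReal 0 1) hkey
  have hIicR : (gaussianReal 0 1 (Set.Iic c)) = ENNReal.ofReal (cdf (gaussianReal 0 1) c) :=
    (ofReal_cdf _ _).symm
  rw [hev, ← Measure.map_apply hN measurableSet_Ioi, hmap, hgmap, hIoi, hIicR,
    ENNReal.toReal_sub_of_le (by rw [← hIicR]; exact prob_le_one) (by simp),
    ENNReal.toReal_one, ENNReal.toReal_ofReal (cdf_nonneg _ _)]
  linarith only [hcdfc]
end
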